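/- arXiv:2211.03669 — 10 statements merged into one kernel-verified Lean document; each statement's English description precedes it below -/
import Mathlib

section
/- Let A be a unital C*-algebra, let α₁, …, αₙ be automorphisms of A, each having the strong averaging property (SAveP), and let b₁, …, bₙ ∈ A. Then for every ε > 0 there exist m ≥ 1 and unitaries v₁, …, v_m ∈ A such that ‖(1/m) ∑_{i=1}^m v_i b_j α_j(v_i)*‖ < ε for every j = 1, …, n. -/
/-!
Fix unitaries `v₁, …, v_m` whose averages for `α₁, …, α_{n-1}` are small. (SAveP) of `αₙ`, applied
to `bₙ' = (1/m) ∑ᵢ vᵢ bₙ αₙ(vᵢ)*`, gives unitaries `u_k` whose average of `bₙ'` is small, and the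
products `u_k vᵢ` then work for every `j`: their average of `bⱼ` is the `u`-average of the
`v`-average of `bⱼ`, and averaging over unitaries does not increase norms. The equal weights come
from approximating a convex combination with weights `wᵢ` by the one with weights
`⌊N wᵢ⌋ / ∑ⱼ ⌊N wⱼ⌋`.
-/

/-- For an automorphism `α` of a unital C*-algebra `A` and `b ∈ A`, the norm-closed convex
hull of `{v * b * star (α v) : v unitary in A}`. -/
def avgSet {A : Type*} [NormedRing A] [StarRing A] [CStarRing A] [NormedAlgebra ℂ A]
    [CompleteSpace A] [StarModule ℂ A] (f : A → A) (b : A) : Set A :=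
  closure (convexHull ℝ {x : A | ∃ v ∈ unitary A, x = v * b * star (f v)})

/-- The strong averaging property (SAveP): `0 ∈ C_A^α(b)` for every `b ∈ A`. -/
def SAveP {A : Type*} [NormedRing A] [StarRing A] [CStarRing A] [NormedAlgebra ℂ A]
    [CompleteSpace A] [StarModule ℂ A] (α : A ≃⋆ₐ[ℂ] A) : Prop :=
  ∀ b : A, (0 : A) ∈ avgSet (⇑α) b

open Finset

section EqualWeights

variable {ι : Type*} [Fintype ι]

theorem sub_card_le_sum_floor_mul {w : ι → ℝ} (hw₁ : ∑ i, w i = 1) (N : ℕ) :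
    (N : ℝ) - Fintype.card ι ≤ ∑ i, (⌊N * w i⌋₊ : ℝ) :=
  calc (N : ℝ) - Fintype.card ι = ∑ i, ((N : ℝ) * w i - 1) := by
        rw [sum_sub_distrib, ← mul_sum, hw₁]; simp
    _ ≤ _ := sum_le_sum fun i _ => by linarith [Nat.lt_floor_add_one ((N : ℝ) * w i)]

theorem sum_abs_floor_mul_div_sub_le {w : ι → ℝ} (hw₀ : ∀ i, 0 ≤ w i) (hw₁ : ∑ i, w i = 1)
    {N : ℕ} (hN : Fintype.card ι < N) :
    ∑ i, |(⌊N * w i⌋₊ : ℝ) / (∑ j, ⌊N * w j⌋₊ : ℕ) - w i| ≤ 2 * Fintype.card ι / N := by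
  set p : ι → ℕ := fun i => ⌊N * w i⌋₊
  set P : ℕ := ∑ j, p j
  have hP : (P : ℝ) = ∑ i, (p i : ℝ) := Nat.cast_sum _ _
  have hpN : ∀ i, (p i : ℝ) ≤ N * w i := fun i => Nat.floor_le (by have := hw₀ i; positivity)
  have hPN : (P : ℝ) ≤ N :=
    calc (P : ℝ) ≤ ∑ i, (N : ℝ) * w i := hP ▸ sum_le_sum fun i _ => hpN i
      _ = N := by rw [← mul_sum, hw₁, mul_one]
  have hNP : (N : ℝ) - Fintype.card ι ≤ P := hP ▸ sub_card_le_sum_floor_mul hw₁ N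
  have hcard : (Fintype.card ι : ℝ) < N := by exact_mod_cast hN
  have hP₀ : (0 : ℝ) < P := by linarith
  have hN₀ : (0 : ℝ) < N := by linarith
  -- through `p i / N` both differences have a fixed sign, so their absolute values sum exactly
  have key : ∀ i, |(p i : ℝ) / P - w i| ≤ ((p i : ℝ) / P - p i / N) + (w i - p i / N) := by
    intro i
    have h₁ : 0 ≤ (p i : ℝ) / P - p i / N :=
      sub_nonneg.2 (div_le_div_of_nonneg_left (Nat.cast_nonneg _) hP₀ hPN)
    have h₂ : (p i : ℝ) / N - w i ≤ 0 :=
      sub_nonpos.2 ((div_le_iff₀ hN₀).2 (by linarith [hpN i]))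
    refine (abs_sub_le _ ((p i : ℝ) / N) _).trans (le_of_eq ?_)
    rw [abs_of_nonneg h₁, abs_of_nonpos h₂]
    ring
  calc ∑ i, |(p i : ℝ) / P - w i|
      ≤ ∑ i, (((p i : ℝ) / P - p i / N) + (w i - p i / N)) := sum_le_sum fun i _ => key i
    _ = 2 * (N - P) / N := by
        rw [sum_add_distrib, sum_sub_distrib, sum_sub_distrib, ← sum_div, ← sum_div, ← hP, hw₁]
        field_simp
        ring
    _ ≤ 2 * Fintype.card ι / N := by gcongr; linarith

theorem exists_fin_sum_eq_sum_nsmul {E : Type*} [AddCommMonoid E] (p : ι → ℕ) (z : ι → E) :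
    ∃ y : Fin (∑ i, p i) → E, (∀ j, y j ∈ Set.range z) ∧ ∑ j, y j = ∑ i, p i • z i := by
  let e : (Σ i, Fin (p i)) ≃ Fin (∑ i, p i) := Fintype.equivFinOfCardEq (by simp)
  refine ⟨fun j => z (e.symm j).1, fun j => ⟨_, rfl⟩, ?_⟩
  rw [← e.sum_comp]
  simp [← univ_sigma_univ, sum_sigma]

end EqualWeights

section ConvexHull

variable {E : Type*} [SeminormedAddCommGroup E] [NormedSpace ℝ E] {S : Set E} {x : E}

theorem exists_average_near_of_mem_convexHull (hx : x ∈ convexHull ℝ S) {ε : ℝ} (hε : 0 < ε) :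
    ∃ m : ℕ, 0 < m ∧ ∃ y : Fin m → E, (∀ j, y j ∈ S) ∧ dist ((m : ℝ)⁻¹ • ∑ j, y j) x < ε := by
  obtain ⟨ι, _, w, z, hw₀, hw₁, hz, rfl⟩ := mem_convexHull_iff_exists_fintype.1 hx
  set R := ∑ i, ‖z i‖
  have hR : 0 ≤ R := sum_nonneg fun i _ => norm_nonneg _
  obtain ⟨N, hN⟩ := exists_nat_gt ((Fintype.card ι : ℝ) + 2 * Fintype.card ι * R / ε)
  have hcardR : 0 ≤ 2 * Fintype.card ι * R / ε := by positivity
  have hcard : Fintype.card ι < N := by exact_mod_cast (show (Fintype.card ι : ℝ) < N by linarith)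
  have hN₀ : (0 : ℝ) < N := by linarith
  set p : ι → ℕ := fun i => ⌊N * w i⌋₊
  set P : ℕ := ∑ i, p i
  have hP₀ : 0 < P := by
    have := sub_card_le_sum_floor_mul hw₁ N
    exact_mod_cast (show (0 : ℝ) < P by push_cast [P, p]; linarith)
  obtain ⟨y, hyz, hy⟩ := exists_fin_sum_eq_sum_nsmul p z
  refine ⟨P, hP₀, y, fun j => ?_, ?_⟩
  · obtain ⟨i, hi⟩ := hyz j
    exact hi ▸ hz i
  have hdiff : (P : ℝ)⁻¹ • ∑ j, y j - ∑ i, w i • z i = ∑ i, ((p i : ℝ) / P - w i) • z i := by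
    rw [hy, smul_sum, ← sum_sub_distrib]
    refine sum_congr rfl fun i _ => ?_
    rw [sub_smul, ← Nat.cast_smul_eq_nsmul ℝ, smul_smul, div_eq_inv_mul]
  rw [dist_eq_norm, hdiff]
  calc ‖∑ i, ((p i : ℝ) / P - w i) • z i‖
      ≤ ∑ i, |(p i : ℝ) / P - w i| * ‖z i‖ :=
        norm_sum_le_of_le _ fun i _ => by rw [norm_smul, Real.norm_eq_abs]
    _ ≤ ∑ i, |(p i : ℝ) / P - w i| * R :=
        sum_le_sum fun i _ => mul_le_mul_of_nonneg_left
          (single_le_sum (fun j _ => norm_nonneg (z j)) (mem_univ i)) (abs_nonneg _)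
    _ ≤ 2 * Fintype.card ι / N * R := by
        rw [← sum_mul]
        exact mul_le_mul_of_nonneg_right (sum_abs_floor_mul_div_sub_le hw₀ hw₁ hcard) hR
    _ < ε := by
        rw [div_mul_eq_mul_div, div_lt_iff₀ hN₀]
        have := (div_lt_iff₀ hε).1 (show 2 * Fintype.card ι * R / ε < N by linarith)
        linarith

theorem exists_average_near_of_mem_closure_convexHull (hx : x ∈ closure (convexHull ℝ S))
    {ε : ℝ} (hε : 0 < ε) :
    ∃ m : ℕ, 0 < m ∧ ∃ y : Fin m → E, (∀ j, y j ∈ S) ∧ dist ((m : ℝ)⁻¹ • ∑ j, y j) x < ε := by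
  obtain ⟨x', hx', hxx'⟩ := Metric.mem_closure_iff.1 hx (ε / 2) (half_pos hε)
  obtain ⟨m, hm, y, hyS, hy⟩ := exists_average_near_of_mem_convexHull hx' (half_pos hε)
  refine ⟨m, hm, y, hyS, ?_⟩
  calc dist ((m : ℝ)⁻¹ • ∑ j, y j) x ≤ dist ((m : ℝ)⁻¹ • ∑ j, y j) x' + dist x' x :=
        dist_triangle _ _ _
    _ < ε / 2 + ε / 2 := add_lt_add hy (by rwa [dist_comm])
    _ = ε := add_halves ε

end ConvexHull

section UnitaryAverage

variable {A : Type*}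

noncomputable def unitaryAverage [Ring A] [Star A] [Module ℝ A] (α : A → A) {ι : Type*} [Fintype ι]
    (v : ι → A) (b : A) : A :=
  (Fintype.card ι : ℝ)⁻¹ • ∑ i, v i * b * star (α (v i))

theorem unitaryAverage_comp_equiv [Ring A] [Star A] [Module ℝ A] (α : A → A)
    {ι κ : Type*} [Fintype ι] [Fintype κ] (e : κ ≃ ι) (v : ι → A) (b : A) :
    unitaryAverage α (v ∘ e) b = unitaryAverage α v b := by
  simp only [unitaryAverage, Function.comp_apply, Fintype.card_congr e,
    e.sum_comp fun i => v i * b * star (α (v i))]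

theorem unitaryAverage_mul [Ring A] [StarRing A] [Algebra ℝ A] {F : Type*} [FunLike F A A]
    [MulHomClass F A A] (α : F) {ι κ : Type*} [Fintype ι] [Fintype κ] (u : ι → A) (v : κ → A)
    (b : A) :
    unitaryAverage α (fun p : ι × κ => u p.1 * v p.2) b =
      unitaryAverage α u (unitaryAverage α v b) := by
  simp only [unitaryAverage, Fintype.card_prod, Nat.cast_mul, mul_inv, Fintype.sum_prod_type,
    smul_sum, mul_sum, sum_mul, mul_smul_comm, smul_mul_assoc, smul_smul, map_mul, star_mul,
    mul_assoc]

theorem norm_unitaryAverage_le [NormedRing A] [StarRing A] [CStarRing A] [NormedAlgebra ℝ A]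
    {F : Type*} [FunLike F A A] [MonoidHomClass F A A] [StarHomClass F A A] (α : F)
    {ι : Type*} [Fintype ι] {v : ι → A} (hv : ∀ i, v i ∈ unitary A) (b : A) :
    ‖unitaryAverage α v b‖ ≤ ‖b‖ := by
  have hterm : ∀ i, ‖v i * b * star (α (v i))‖ = ‖b‖ := fun i => by
    rw [CStarRing.norm_mul_mem_unitary _ (Unitary.star_mem (Unitary.map_mem α (hv i))),
      CStarRing.norm_mem_unitary_mul _ (hv i)]
  calc ‖unitaryAverage α v b‖
      ≤ (Fintype.card ι : ℝ)⁻¹ * ∑ i, ‖v i * b * star (α (v i))‖ := by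
        rw [unitaryAverage, norm_smul, norm_inv, Real.norm_natCast]
        gcongr
        exact norm_sum_le _ _
    _ = (Fintype.card ι : ℝ)⁻¹ * Fintype.card ι * ‖b‖ := by
        rw [sum_congr rfl fun i _ => hterm i, sum_const, card_univ, nsmul_eq_mul, mul_assoc]
    _ ≤ ‖b‖ := mul_le_of_le_one_left (norm_nonneg b) (inv_mul_le_one_of_le₀ le_rfl (by positivity))

end UnitaryAverage

section SAveP

variable {A : Type*} [NormedRing A] [StarRing A] [CStarRing A] [NormedAlgebra ℂ A]
  [CompleteSpace A] [StarModule ℂ A]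

theorem SAveP.exists_unitaryAverage_lt {α : A ≃⋆ₐ[ℂ] A} (hα : SAveP α) (b : A) {ε : ℝ}
    (hε : 0 < ε) :
    ∃ m : ℕ, 0 < m ∧ ∃ v : Fin m → A, (∀ i, v i ∈ unitary A) ∧ ‖unitaryAverage α v b‖ < ε := by
  obtain ⟨m, hm, y, hy, hyε⟩ := exists_average_near_of_mem_closure_convexHull (hα b) hε
  choose v hv hyv using hy
  refine ⟨m, hm, v, hv, ?_⟩
  simpa [unitaryAverage, ← hyv] using hyε

theorem SAveP.exists_refinement {α : A ≃⋆ₐ[ℂ] A} (hα : SAveP α) (b : A) {ε : ℝ} (hε : 0 < ε)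
    {m : ℕ} (hm : 0 < m) {v : Fin m → A} (hv : ∀ i, v i ∈ unitary A) :
    ∃ m' : ℕ, 0 < m' ∧ ∃ w : Fin m' → A, (∀ i, w i ∈ unitary A) ∧
      ‖unitaryAverage α w b‖ < ε ∧
      ∀ (β : A ≃⋆ₐ[ℂ] A) (c : A), ‖unitaryAverage β w c‖ ≤ ‖unitaryAverage β v c‖ := by
  obtain ⟨k, hk, u, hu, huε⟩ := hα.exists_unitaryAverage_lt (unitaryAverage α v b) hε
  let w : Fin (k * m) → A := (fun p : Fin k × Fin m => u p.1 * v p.2) ∘ finProdFinEquiv.symm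
  have hw : ∀ (β : A ≃⋆ₐ[ℂ] A) (c : A),
      unitaryAverage β w c = unitaryAverage β u (unitaryAverage β v c) := fun β c => by
    rw [unitaryAverage_comp_equiv, unitaryAverage_mul]
  refine ⟨k * m, Nat.mul_pos hk hm, w, fun i => mul_mem (hu _) (hv _), by rwa [hw], ?_⟩
  intro β c
  rw [hw]
  exact norm_unitaryAverage_le β hu _

theorem exists_unitaryAverage_lt_of_forall_mem {κ : Type*} (s : Finset κ)
    {α : κ → A ≃⋆ₐ[ℂ] A} (hα : ∀ j ∈ s, SAveP (α j)) (b : κ → A) {ε : ℝ} (hε : 0 < ε) :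
    ∃ m : ℕ, 0 < m ∧ ∃ v : Fin m → A, (∀ i, v i ∈ unitary A) ∧
      ∀ j ∈ s, ‖unitaryAverage (α j) v (b j)‖ < ε := by
  classical
  induction s using Finset.induction_on with
  | empty => exact ⟨1, one_pos, fun _ => 1, fun _ => one_mem _, by simp⟩
  | insert j s _ ih =>
    obtain ⟨m, hm, v, hv, hvε⟩ := ih fun k hk => hα k (mem_insert_of_mem hk)
    obtain ⟨m', hm', w, hw, hwε, hwv⟩ :=
      (hα j (mem_insert_self j s)).exists_refinement (b j) hε hm hv
    refine ⟨m', hm', w, hw, fun k hk => ?_⟩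
    rcases mem_insert.1 hk with rfl | hk
    · exact hwε
    · exact (hwv _ _).trans_lt (hvε k hk)

end SAveP

/-- Lemma 2.2: if automorphisms `α₁, …, αₙ` of a unital C*-algebra all have (SAveP) and
`b₁, …, bₙ ∈ A`, then for every `ε > 0` there are unitaries `v₁, …, v_m` with
`‖(1/m) ∑ᵢ vᵢ bⱼ αⱼ(vᵢ)*‖ < ε` for every `j`. -/
theorem strong_averaging_simultaneous
    {A : Type*} [NormedRing A] [StarRing A] [CStarRing A] [NormedAlgebra ℂ A]
    [CompleteSpace A] [StarModule ℂ A]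
    (n : ℕ) (α : Fin n → (A ≃⋆ₐ[ℂ] A)) (hα : ∀ j, SAveP (α j))
    (b : Fin n → A) (ε : ℝ) (hε : 0 < ε) :
    ∃ m : ℕ, 0 < m ∧ ∃ v : Fin m → A, (∀ i, v i ∈ unitary A) ∧
      ∀ j : Fin n,
        ‖(1 / (m : ℝ)) • ∑ i : Fin m, v i * b j * star (α j (v i))‖ < ε := by
  obtain ⟨m, hm, v, hv, hvε⟩ :=
    exists_unitaryAverage_lt_of_forall_mem univ (fun j _ => hα j) b hε
  refine ⟨m, hm, v, hv, fun j => ?_⟩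
  simpa [unitaryAverage, one_div] using hvε j (mem_univ j)
end

section
/- Let α be an automorphism of a unital C*-algebra A and let u be a unitary element of A. Then the automorphism Ad_u ∘ α (given by a ↦ u α(a) u*) has the averaging property (AveP) if and only if 0 ∈ C_A^α(u). -/
/-! Right multiplication by `star u` is a real-linear homeomorphism carrying each generator
`v * (b * u) * star (f v)` of `C_A^f(b u)` to the generator `v * b * star (u * f v * star u)` of
`C_A^{Ad_u ∘ f}(b)`, so it maps the first set onto the second and `0` to `0`. -/

theorem ContinuousLinearEquiv.image_closure_convexHull {𝕜 E F : Type*} [Semiring 𝕜] [PartialOrder 𝕜]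
    [AddCommMonoid E] [Module 𝕜 E] [TopologicalSpace E]
    [AddCommMonoid F] [Module 𝕜 F] [TopologicalSpace F] (e : E ≃L[𝕜] F) (s : Set E) :
    e '' closure (convexHull 𝕜 s) = closure (convexHull 𝕜 (e '' s)) := by
  rw [e.image_closure]
  exact congrArg closure ((e : E →L[𝕜] F).toLinearMap.image_convexHull s)

theorem avgSet_conj_eq_image_mulRight {A : Type*} [NormedRing A] [StarRing A] [CStarRing A]
    [NormedAlgebra ℂ A] [CompleteSpace A] [StarModule ℂ A] (f : A → A) (b : A) (u : unitary A) :
    avgSet (fun a => u * f a * star (u : A)) b =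
      Unitary.mulRight ℝ (star u) '' avgSet f (b * u) := by
  unfold avgSet
  rw [← LinearIsometryEquiv.coe_toContinuousLinearEquiv,
    ContinuousLinearEquiv.image_closure_convexHull]
  congr 2
  ext x
  simp only [Set.mem_image, Set.mem_ofPred_eq, LinearIsometryEquiv.coe_toContinuousLinearEquiv,
    Unitary.mulRight_apply, Unitary.coe_star, star_mul, star_star]
  constructor
  · rintro ⟨v, hv, rfl⟩
    exact ⟨_, ⟨v, hv, rfl⟩, by noncomm_ring⟩
  · rintro ⟨_, ⟨v, hv, rfl⟩, rfl⟩
    exact ⟨v, hv, by noncomm_ring⟩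

/-- Lemma 2.3 (i): for an automorphism `α` of a unital C*-algebra `A` and a unitary `u ∈ A`,
the automorphism `Ad_u ∘ α` has the averaging property (AveP), i.e. `0 ∈ C_A^{Ad_u ∘ α}(1)`,
if and only if `0 ∈ C_A^α(u)`. -/
theorem adu_comp_aveP_iff
    {A : Type*} [NormedRing A] [StarRing A] [CStarRing A] [NormedAlgebra ℂ A]
    [CompleteSpace A] [StarModule ℂ A]
    (α : A ≃⋆ₐ[ℂ] A) (u : A) (hu : u ∈ unitary A) :
    (0 : A) ∈ avgSet (fun a => u * α a * star u) 1 ↔ (0 : A) ∈ avgSet (⇑α) u := by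
  lift u to unitary A using hu
  rw [avgSet_conj_eq_image_mulRight, one_mul]
  simpa using (Unitary.mulRight ℝ (star u)).injective.mem_set_image (a := 0)
end

section
/- Let α be an automorphism of a unital C*-algebra A whose invertible elements are norm-dense in A (i.e., A has stable rank one). If Ad_u ∘ α (given by a ↦ u α(a) u*) has the averaging property (AveP) for every unitary u ∈ A, then α has the strong averaging property (SAveP). -/
open Filter Topology in
lemma zero_mem_closure_of_forall_exists_norm_le_mul {E : Type*} [SeminormedAddCommGroup E]
    {s : Set E} {r : ℝ} (hr : r < 1) (hs : s.Nonempty)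
    (h : ∀ y ∈ s, ∃ z ∈ s, ‖z‖ ≤ r * ‖y‖) : (0 : E) ∈ closure s := by
  obtain ⟨y₀, hy₀⟩ := hs
  set q := max r 0
  have hseq : ∀ n : ℕ, ∃ z ∈ s, ‖z‖ ≤ q ^ n * ‖y₀‖ := by
    intro n
    induction n with
    | zero => exact ⟨y₀, hy₀, by simp⟩
    | succ n ih =>
      obtain ⟨y, hy, hyn⟩ := ih
      obtain ⟨z, hz, hzy⟩ := h y hy
      refine ⟨z, hz, ?_⟩
      calc ‖z‖ ≤ q * ‖y‖ := hzy.trans (by gcongr; exact le_max_left r 0)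
        _ ≤ q * (q ^ n * ‖y₀‖) := by gcongr
        _ = q ^ (n + 1) * ‖y₀‖ := by ring
  choose z hzs hzn using hseq
  have hq : Tendsto (fun n => q ^ n * ‖y₀‖) atTop (𝓝 0) := by
    simpa using (tendsto_pow_atTop_nhds_zero_of_lt_one (le_max_right r 0)
      (max_lt hr one_pos)).mul_const ‖y₀‖
  exact mem_closure_of_tendsto (squeeze_zero_norm hzn hq) (.of_forall hzs)

section TwistedConj

variable {A : Type*} [NormedRing A] [StarRing A] [NormedAlgebra ℝ A]

noncomputable def twistedConj (f : A → A) (v : unitary A) : A →L[ℝ] A :=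
  ContinuousLinearMap.mulLeftRight ℝ A v (star (f v))

@[simp]
lemma twistedConj_apply (f : A → A) (v : unitary A) (x : A) :
    twistedConj f v x = v * x * star (f v) := rfl

def averagingMaps (f : A → A) : Set (A →L[ℝ] A) := convexHull ℝ (Set.range (twistedConj f))

variable {F : Type*} [FunLike F A A] [MonoidHomClass F A A]

lemma twistedConj_comp_twistedConj (α : F) (v w : unitary A) :
    (twistedConj α v).comp (twistedConj α w) = twistedConj α (v * w) := by
  ext x
  simp [mul_assoc]

lemma comp_mem_averagingMaps {α : F} {T S : A →L[ℝ] A} (hT : T ∈ averagingMaps α)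
    (hS : S ∈ averagingMaps α) : T.comp S ∈ averagingMaps α := by
  have hgen : ∀ v, ∀ S ∈ averagingMaps α, (twistedConj α v).comp S ∈ averagingMaps α := by
    intro v
    refine convexHull_min ?_ ((convex_convexHull ℝ _).linear_preimage
      (ContinuousLinearMap.compL ℝ A A A (twistedConj α v) : (A →L[ℝ] A) →ₗ[ℝ] (A →L[ℝ] A)))
    rintro _ ⟨w, rfl⟩
    exact subset_convexHull ℝ _ ⟨v * w, (twistedConj_comp_twistedConj α v w).symm⟩
  refine convexHull_min ?_ ((convex_convexHull ℝ _).linear_preimage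
    ((ContinuousLinearMap.compL ℝ A A A).flip S : (A →L[ℝ] A) →ₗ[ℝ] (A →L[ℝ] A))) hT
  rintro _ ⟨v, rfl⟩
  exact hgen v S hS

variable [CStarRing A] [StarHomClass F A A]

lemma norm_twistedConj_le (α : F) (v : unitary A) : ‖twistedConj α v‖ ≤ 1 :=
  ContinuousLinearMap.opNorm_le_bound _ zero_le_one fun x => by
    rw [twistedConj_apply, CStarRing.norm_mul_mem_unitary _
      (Unitary.star_mem (Unitary.map_mem α v.2)), CStarRing.norm_coe_unitary_mul, one_mul]

lemma norm_le_one_of_mem_averagingMaps {α : F} {T : A →L[ℝ] A} (hT : T ∈ averagingMaps α) :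
    ‖T‖ ≤ 1 := by
  have : averagingMaps α ⊆ Metric.closedBall 0 1 :=
    convexHull_min (Set.range_subset_iff.2 fun v => by simpa using norm_twistedConj_le α v)
      (convex_closedBall 0 1)
  simpa using this hT

end TwistedConj

section CStarAlgebra

variable {A : Type*} [CStarAlgebra A]

lemma IsSelfAdjoint.exists_mem_unitary_eq_two_inv_smul_add_star [PartialOrder A] [StarOrderedRing A] {b : A}
    (hb : IsSelfAdjoint b) (hb₁ : ‖b‖ ≤ 1) :
    ∃ w ∈ unitary A, b = (2⁻¹ : ℝ) • (w + star w) := by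
  refine ⟨_, (selfAdjoint.unitarySelfAddISMul ⟨b, hb⟩ hb₁).2, ?_⟩
  have := congrArg Subtype.val (selfAdjoint.realPart_unitarySelfAddISMul ⟨b, hb⟩ hb₁)
  rwa [realPart_apply_coe, eq_comm] at this

lemma IsUnit.exists_mem_unitary_eq_mul_abs [PartialOrder A] [StarOrderedRing A] {a : A}
    (ha : IsUnit a) : ∃ u ∈ unitary A, a = u * CFC.abs a := by
  obtain ⟨c, hc⟩ : IsUnit (CFC.abs a) :=
    (isUnit_pow_iff two_ne_zero).1 (CFC.abs_sq a ▸ ha.star.mul ha)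
  have hc_star : star ((c⁻¹ : Aˣ) : A) = c⁻¹ := by
    rw [← Units.coe_star_inv]
    congr
    ext
    rw [Units.coe_star, hc, (CFC.abs_nonneg a).isSelfAdjoint.star_eq]
  refine ⟨a * ↑c⁻¹, (ha.mul c⁻¹.isUnit).mem_unitary_of_star_mul_self ?_, ?_⟩
  · rw [star_mul, hc_star, mul_assoc, ← mul_assoc (star a), ← CFC.abs_mul_abs, ← hc]
    simp [mul_assoc]
  · rw [← hc, mul_assoc, Units.inv_mul, mul_one]

lemma IsUnit.exists_mem_unitary_eq_norm_div_two_smul_add {a : A} (ha : IsUnit a) :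
    ∃ u₁ ∈ unitary A, ∃ u₂ ∈ unitary A, a = (‖a‖ / 2) • (u₁ + u₂) := by
  let _ := CStarAlgebra.spectralOrder A
  let _ := CStarAlgebra.spectralOrderedRing A
  obtain ⟨u, hu, hua⟩ := ha.exists_mem_unitary_eq_mul_abs
  have hb : IsSelfAdjoint (NormedSpace.normalize (CFC.abs a)) :=
    (IsSelfAdjoint.all _).smul (CFC.abs_nonneg a).isSelfAdjoint
  have hb₁ : ‖NormedSpace.normalize (CFC.abs a)‖ ≤ 1 := by
    rw [NormedSpace.normalize, norm_smul, norm_inv, norm_norm, inv_mul_eq_div]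
    exact div_self_le_one _
  obtain ⟨w, hw, hbw⟩ := hb.exists_mem_unitary_eq_two_inv_smul_add_star hb₁
  refine ⟨u * w, mul_mem hu hw, u * star w, mul_mem hu (Unitary.star_mem hw), ?_⟩
  calc a = u * (‖CFC.abs a‖ • NormedSpace.normalize (CFC.abs a)) := by
        rw [NormedSpace.norm_smul_normalize, ← hua]
    _ = _ := by
        rw [hbw, CFC.norm_abs]
        simp only [mul_add, mul_smul_comm]
        module

end CStarAlgebra

section AvgSet

variable {A : Type*} [NormedRing A] [StarRing A] [CStarRing A] [NormedAlgebra ℂ A]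
    [CompleteSpace A] [StarModule ℂ A]

lemma avgSet_eq_closure_image_averagingMaps (f : A → A) (b : A) :
    avgSet f b = closure ((fun T : A →L[ℝ] A => T b) '' averagingMaps f) := by
  have hconv : (fun T : A →L[ℝ] A => T b) '' convexHull ℝ (Set.range (twistedConj f)) =
      convexHull ℝ ((fun T : A →L[ℝ] A => T b) '' Set.range (twistedConj f)) :=
    (ContinuousLinearMap.apply ℝ A b : (A →L[ℝ] A) →ₗ[ℝ] A).image_convexHull _
  rw [avgSet, averagingMaps, hconv]
  congr 2
  ext x
  simp [eq_comm]

lemma mul_mem_avgSet_of_mem_avgSet_conj (f : A → A) {u : A} (hu : u ∈ unitary A) {b y : A}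
    (hy : y ∈ avgSet (fun a => u * f a * star u) b) : y * u ∈ avgSet f (b * u) := by
  let R : A →L[ℝ] A := ContinuousLinearMap.mulLeftRight ℝ A 1 u
  have hR : R '' {x | ∃ v ∈ unitary A, x = v * b * star (u * f v * star u)} ⊆
      {x | ∃ v ∈ unitary A, x = v * (b * u) * star (f v)} := by
    rintro _ ⟨_, ⟨v, hv, rfl⟩, rfl⟩
    refine ⟨v, hv, ?_⟩
    simp [R, mul_assoc, Unitary.star_mul_self_of_mem hu]
  have hconv : ∀ s : Set A, R '' convexHull ℝ s = convexHull ℝ (R '' s) :=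
    (R : A →ₗ[ℝ] A).image_convexHull
  have := image_closure_subset_closure_image R.continuous ⟨y, hy, rfl⟩
  rw [hconv] at this
  simpa [R, avgSet] using closure_mono (convexHull_mono hR) this

variable {F : Type*} [FunLike F A A] [StarHomClass F A A] [MonoidHomClass F A A]

lemma exists_mem_averagingMaps_norm_apply_le (hsr1 : Dense {a : A | IsUnit a}) {α : F}
    (hα : ∀ u ∈ unitary A, (0 : A) ∈ avgSet α u) (x : A) :
    ∃ T ∈ averagingMaps α, ‖T x‖ ≤ 3 / 4 * ‖x‖ := by
  let _ : CStarAlgebra A := { }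
  rcases eq_or_ne x 0 with rfl | hx
  · exact ⟨twistedConj α 1, subset_convexHull ℝ _ ⟨1, rfl⟩, by simp⟩
  have : Nontrivial A := ⟨⟨x, 0, hx⟩⟩
  obtain ⟨a, ha, hxa⟩ : ∃ a ∈ {a : A | IsUnit a}, dist x a < ‖x‖ / 8 :=
    Metric.mem_closure_iff.1 (hsr1 x) _ (by positivity)
  obtain ⟨u₁, hu₁, u₂, hu₂, hau⟩ := IsUnit.exists_mem_unitary_eq_norm_div_two_smul_add ha
  obtain ⟨T, hT, hTu₁⟩ : ∃ T ∈ averagingMaps α, ‖T u₁‖ < 1 / 9 := by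
    have := hα u₁ hu₁
    rw [avgSet_eq_closure_image_averagingMaps, Metric.mem_closure_iff] at this
    obtain ⟨_, ⟨T, hT, rfl⟩, hT'⟩ := this (1 / 9) (by norm_num)
    exact ⟨T, hT, by simpa using hT'⟩
  have hT₁ (y : A) : ‖T y‖ ≤ ‖y‖ :=
    T.le_of_opNorm_le (norm_le_one_of_mem_averagingMaps hT) y |>.trans_eq (one_mul _)
  have hTu₂ : ‖T u₂‖ ≤ 1 := (hT₁ u₂).trans (CStarRing.norm_of_mem_unitary hu₂).le
  have ha_le : ‖a‖ ≤ 9 / 8 * ‖x‖ := by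
    rw [dist_eq_norm] at hxa
    linarith [norm_sub_norm_le a x, norm_sub_rev a x]
  have hTx : T x = (‖a‖ / 2) • (T u₁ + T u₂) + T (x - a) := by
    rw [← map_add, ← map_smul, ← map_add, ← hau, add_sub_cancel]
  refine ⟨T, hT, ?_⟩
  calc ‖T x‖ ≤ ‖a‖ / 2 * (‖T u₁‖ + ‖T u₂‖) + ‖x - a‖ := by
        rw [hTx]
        refine (norm_add_le _ _).trans (add_le_add ?_ (hT₁ _))
        rw [norm_smul, Real.norm_of_nonneg (by positivity)]
        gcongr
        exact norm_add_le _ _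
    _ ≤ 9 / 8 * ‖x‖ / 2 * (1 / 9 + 1) + ‖x‖ / 8 := by
        rw [dist_eq_norm] at hxa
        gcongr
    _ = 3 / 4 * ‖x‖ := by ring

end AvgSet

/-- Proposition 2.4, second half: if `A` is a unital C*-algebra of stable rank one (its
invertible elements are norm-dense) and `Ad_u ∘ α` has (AveP) for every unitary `u ∈ A`,
then `α` has (SAveP). -/
theorem adu_aveP_implies_saveP_of_stable_rank_one
    {A : Type*} [NormedRing A] [StarRing A] [CStarRing A] [NormedAlgebra ℂ A]
    [CompleteSpace A] [StarModule ℂ A]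
    (hsr1 : Dense {a : A | IsUnit a})
    (α : A ≃⋆ₐ[ℂ] A)
    (h : ∀ u ∈ unitary A, (0 : A) ∈ avgSet (fun a => u * α a * star u) 1) :
    SAveP α := by
  have hα : ∀ u ∈ unitary A, (0 : A) ∈ avgSet α u := fun u hu => by
    simpa using mul_mem_avgSet_of_mem_avgSet_conj α hu (h u hu)
  intro b
  rw [avgSet_eq_closure_image_averagingMaps]
  refine zero_mem_closure_of_forall_exists_norm_le_mul (r := 3 / 4) (by norm_num)
    ⟨_, ⟨_, subset_convexHull ℝ _ ⟨1, rfl⟩, rfl⟩⟩ ?_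
  rintro _ ⟨S, hS, rfl⟩
  obtain ⟨T, hT, hTS⟩ := exists_mem_averagingMaps_norm_apply_le hsr1 hα (S b)
  exact ⟨T (S b), ⟨T.comp S, comp_mem_averagingMaps hT hS, rfl⟩, hTS⟩
end

section
/- Let α be an automorphism of a unital C*-algebra A with the strong averaging property (SAveP). Then α is residually outer: for every nonzero unital C*-algebra Q, every surjective unital *-homomorphism π : A → Q, and every automorphism β of Q satisfying π ∘ α = β ∘ π, the automorphism β is outer, i.e., there is no unitary u ∈ Q with β(x) = u x u* for all x ∈ Q. -/
/-!
If `β = Ad w` on the quotient `Q`, lift `star w` to some `b ∈ A`. The intertwining relation makes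
`π (v * b * star (α v)) = star w` for every unitary `v`, so the continuous affine map `π` is
constant on the closed convex hull `C_A^α(b)`. By (SAveP) this hull contains `0`, forcing the
unitary `star w` to vanish in the nonzero algebra `Q`.
-/

universe u

open scoped CStarAlgebra

theorem avgSet_subset_of_convex_of_isClosed {A : Type*} [NormedRing A] [StarRing A]
    [CStarRing A] [NormedAlgebra ℂ A] [CompleteSpace A] [StarModule ℂ A]
    {f : A → A} {b : A} {s : Set A} (hs : Convex ℝ s) (hs' : IsClosed s)
    (h : ∀ v ∈ unitary A, v * b * star (f v) ∈ s) : avgSet f b ⊆ s :=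
  closure_minimal (convexHull_min (by rintro _ ⟨v, hv, rfl⟩; exact h v hv) hs) hs'

theorem mul_star_mul_star_conj_eq {M : Type*} [Monoid M] [StarMul M] {x w : M}
    (hx : x * star x = 1) (hw : star w * w = 1) :
    x * star w * star (w * x * star w) = star w := by
  calc x * star w * star (w * x * star w)
      = x * (star w * w) * star x * star w := by simp only [star_mul, star_star, mul_assoc]
    _ = star w := by rw [hw, mul_one, hx, one_mul]

/-- Proposition 2.9: an automorphism of a unital C*-algebra with (SAveP) is residually
outer: for every nonzero unital C*-algebra `Q`, surjective unital *-homomorphism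
`π : A → Q`, and automorphism `β` of `Q` with `π ∘ α = β ∘ π`, the automorphism `β` is
outer. -/
theorem saveP_implies_residually_outer
    {A : Type u} [NormedRing A] [StarRing A] [CStarRing A] [NormedAlgebra ℂ A]
    [CompleteSpace A] [StarModule ℂ A]
    (α : A ≃⋆ₐ[ℂ] A) (hα : SAveP α) :
    ∀ (Q : Type u) [NormedRing Q] [StarRing Q] [CStarRing Q] [NormedAlgebra ℂ Q]
      [CompleteSpace Q] [StarModule ℂ Q] [Nontrivial Q]
      (π : A →⋆ₐ[ℂ] Q), Function.Surjective π →
      ∀ β : Q ≃⋆ₐ[ℂ] Q, (∀ a : A, π (α a) = β (π a)) →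
        ¬ ∃ w ∈ unitary Q, ∀ x : Q, β x = w * x * star w := by
  intro Q _ _ _ _ _ _ _ π hπ β hcomm ⟨w, hw, hβ⟩
  -- bundled so that the scoped instance making *-homomorphisms continuous applies to `π`
  let _ : CStarAlgebra A := ⟨⟩
  let _ : CStarAlgebra Q := ⟨⟩
  obtain ⟨b, hb⟩ := hπ (star w)
  have hgen : ∀ v ∈ unitary A, π (v * b * star (α v)) = star w := fun v hv => by
    rw [map_mul, map_mul, map_star, hcomm, hβ, hb]
    refine mul_star_mul_star_conj_eq ?_ (Unitary.star_mul_self_of_mem hw)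
    rw [← map_star, ← map_mul, Unitary.mul_star_self_of_mem hv, map_one]
  have hzero : π 0 = star w := avgSet_subset_of_convex_of_isClosed
    ((convex_singleton _).linear_preimage (π.toLinearMap.restrictScalars ℝ))
    (isClosed_singleton.preimage (map_continuous π)) hgen (hα b)
  exact one_ne_zero <| by rw [← Unitary.star_mul_self_of_mem hw, ← hzero, map_zero, zero_mul]
end

section
/- Let M be a von Neumann algebra on a complex Hilbert space H and let α be a *-algebra automorphism of M. Assume that for every unitary w ∈ M, every nonzero projection p ∈ M, and every ε > 0 there exists a nonzero projection q ∈ M with q ≤ p and ‖q w α(q)‖ < ε. Then for every b ∈ M, every ε > 0, and every nonzero projection p ∈ M there exists a nonzero projection q ∈ M with q ≤ p and ‖q b α(q)‖ < ε. -/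
/-!
For projections `q ≤ r` we have `q b α(q) = q (r b α(r)) α(q)`, so passing to a smaller
projection only shrinks `‖q b α(q)‖`. Hence two elements can be made small one after the other
below the same `p`, and the elements `b` for which `‖q b α(q)‖` can be made arbitrarily small
below every nonzero projection form a linear subspace. By hypothesis it contains the unitaries,
which span the C⋆-algebra `M`.
-/

section

variable {A : Type*} [NormedRing A] [StarRing A]

def HasSmallCorners (α : A → A) (b : A) : Prop :=
  ∀ p : A, IsStarProjection p → p ≠ 0 → ∀ ε : ℝ, 0 < ε →
    ∃ q : A, IsStarProjection q ∧ q ≠ 0 ∧ q * p = q ∧ ‖q * b * α q‖ < ε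

lemma hasSmallCorners_zero (α : A → A) : HasSmallCorners α 0 :=
  fun p hp hp0 ε hε ↦ ⟨p, hp, hp0, hp.isIdempotentElem.eq, by simpa using hε⟩

lemma HasSmallCorners.smul {α : A → A} {𝕜 : Type*} [NormedField 𝕜] [NormedAlgebra 𝕜 A] {b : A}
    (h : HasSmallCorners α b) (c : 𝕜) : HasSmallCorners α (c • b) := by
  intro p hp hp0 ε hε
  obtain ⟨q, hq, hq0, hqp, hb⟩ := h p hp hp0 (ε / (‖c‖ + 1)) (by positivity)
  refine ⟨q, hq, hq0, hqp, ?_⟩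
  calc ‖q * (c • b) * α q‖ = ‖c‖ * ‖q * b * α q‖ := by
        rw [mul_smul_comm, smul_mul_assoc, norm_smul]
    _ ≤ (‖c‖ + 1) * ‖q * b * α q‖ := by gcongr; linarith
    _ < (‖c‖ + 1) * (ε / (‖c‖ + 1)) := by gcongr
    _ = ε := mul_div_cancel₀ _ (by positivity)

variable [CStarRing A] {F : Type*} [FunLike F A A] [StarHomClass F A A] [MulHomClass F A A]

lemma norm_mul_mul_map_le_of_mul_eq_left (α : F) {q r : A} (hq : IsStarProjection q)
    (hr : IsSelfAdjoint r) (hqr : q * r = q) (b : A) :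
    ‖q * b * α q‖ ≤ ‖r * b * α r‖ := by
  have hrq : r * q = q := by
    simpa [hq.isSelfAdjoint.star_eq, hr.star_eq] using congr(star $hqr)
  have hsandwich : q * (r * b * α r) * α q = q * b * α q := by
    calc q * (r * b * α r) * α q = q * r * b * (α r * α q) := by simp only [mul_assoc]
      _ = q * b * α q := by rw [hqr, ← map_mul, hrq]
  calc ‖q * b * α q‖ = ‖q * (r * b * α r) * α q‖ := by rw [hsandwich]
    _ ≤ ‖q‖ * ‖r * b * α r‖ * ‖α q‖ := norm_mul₃_le
    _ ≤ 1 * ‖r * b * α r‖ * 1 := by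
        gcongr
        · exact hq.norm_le
        · exact (hq.map α).norm_le
    _ = ‖r * b * α r‖ := by ring

lemma HasSmallCorners.add {α : F} {b₁ b₂ : A} (h₁ : HasSmallCorners α b₁)
    (h₂ : HasSmallCorners α b₂) : HasSmallCorners α (b₁ + b₂) := by
  intro p hp hp0 ε hε
  obtain ⟨q₁, hq₁, hq₁0, hq₁p, hb₁⟩ := h₁ p hp hp0 (ε / 2) (half_pos hε)
  obtain ⟨q, hq, hq0, hqq₁, hb₂⟩ := h₂ q₁ hq₁ hq₁0 (ε / 2) (half_pos hε)
  have hb₁' : ‖q * b₁ * α q‖ < ε / 2 :=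
    (norm_mul_mul_map_le_of_mul_eq_left α hq hq₁.isSelfAdjoint hqq₁ b₁).trans_lt hb₁
  refine ⟨q, hq, hq0, by rw [← hqq₁, mul_assoc, hq₁p], ?_⟩
  calc ‖q * (b₁ + b₂) * α q‖ = ‖q * b₁ * α q + q * b₂ * α q‖ := by rw [mul_add, add_mul]
    _ ≤ ‖q * b₁ * α q‖ + ‖q * b₂ * α q‖ := norm_add_le _ _
    _ < ε / 2 + ε / 2 := add_lt_add hb₁' hb₂
    _ = ε := add_halves ε

variable (𝕜 : Type*) [NormedField 𝕜] [NormedAlgebra 𝕜 A] (α : F)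

def smallCornersSubmodule : Submodule 𝕜 A where
  carrier := {b | HasSmallCorners α b}
  zero_mem' := hasSmallCorners_zero α
  add_mem' := HasSmallCorners.add
  smul_mem' c _ h := h.smul c

end

lemma hasSmallCorners_of_forall_unitary {A : Type*} [CStarAlgebra A] {F : Type*} [FunLike F A A]
    [StarHomClass F A A] [MulHomClass F A A] {α : F}
    (h : ∀ u ∈ unitary A, HasSmallCorners α u) (b : A) : HasSmallCorners α b := by
  have hspan : Submodule.span ℂ (unitary A : Set A) ≤ smallCornersSubmodule ℂ α :=
    Submodule.span_le.mpr h
  exact hspan (CStarAlgebra.span_unitary A ▸ Submodule.mem_top)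

/-- Through `StarSubalgebra.cstarAlgebra`, this makes `M` a `CStarAlgebra`. -/
instance VonNeumannAlgebra.isClosed_toStarSubalgebra {H : Type*} [NormedAddCommGroup H]
    [InnerProductSpace ℂ H] [CompleteSpace H] (M : VonNeumannAlgebra H) :
    IsClosed (M.toStarSubalgebra : Set (H →L[ℂ] H)) := by
  rw [M.coe_toStarSubalgebra, ← M.centralizer_centralizer]
  exact Set.isClosed_centralizer _

/-- Lemma 2.11 (i): let `M` be a von Neumann algebra on a complex Hilbert space `H` and `α`
a *-automorphism of `M` such that for every unitary `w ∈ M`, nonzero projection `p ∈ M`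
and `ε > 0` there is a nonzero projection `q ≤ p` with `‖q w α(q)‖ < ε` (Connes'
characterization of proper outerness of all `Ad_w ∘ α`).  Then for every `b ∈ M`, `ε > 0`
and nonzero projection `p ∈ M` there is a nonzero projection `q ≤ p` with `‖q b α(q)‖ < ε`. -/
theorem properly_outer_small_corner
    {H : Type*} [NormedAddCommGroup H] [InnerProductSpace ℂ H] [CompleteSpace H]
    (M : VonNeumannAlgebra H) (α : ↥M.toStarSubalgebra ≃⋆ₐ[ℂ] ↥M.toStarSubalgebra)
    (hconnes : ∀ w : ↥M.toStarSubalgebra, w ∈ unitary ↥M.toStarSubalgebra →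
      ∀ p : ↥M.toStarSubalgebra, IsSelfAdjoint p → p * p = p → p ≠ 0 →
      ∀ ε : ℝ, 0 < ε →
        ∃ q : ↥M.toStarSubalgebra, IsSelfAdjoint q ∧ q * q = q ∧ q ≠ 0 ∧ q * p = q ∧
          ‖((q * w * α q : ↥M.toStarSubalgebra) : H →L[ℂ] H)‖ < ε) :
    ∀ b : ↥M.toStarSubalgebra, ∀ ε : ℝ, 0 < ε →
      ∀ p : ↥M.toStarSubalgebra, IsSelfAdjoint p → p * p = p → p ≠ 0 →
        ∃ q : ↥M.toStarSubalgebra, IsSelfAdjoint q ∧ q * q = q ∧ q ≠ 0 ∧ q * p = q ∧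
          ‖((q * b * α q : ↥M.toStarSubalgebra) : H →L[ℂ] H)‖ < ε := by
  intro b ε hε p hp hpp hp0
  have hunitary (w) (hw : w ∈ unitary ↥M.toStarSubalgebra) : HasSmallCorners α w := by
    intro p hp hp0 ε hε
    obtain ⟨q, hq, hqq, hq0, hqp, hqw⟩ :=
      hconnes w hw p hp.isSelfAdjoint hp.isIdempotentElem.eq hp0 ε hε
    exact ⟨q, ⟨hqq, hq⟩, hq0, hqp, hqw⟩
  obtain ⟨q, hq, hq0, hqp, hqb⟩ :=
    hasSmallCorners_of_forall_unitary hunitary b p ⟨hpp, hp⟩ hp0 ε hε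
  exact ⟨q, hq.isSelfAdjoint, hq.isIdempotentElem.eq, hq0, hqp, hqb⟩
end

section
/- Let A be a unital C*-algebra, let a ∈ A, let ε > 0, and let p ∈ A be a projection (p = p* = p²) satisfying: (a) ‖p a p‖ ≤ ε; (b) p is properly infinite, i.e., there exist s₁, s₂ ∈ A with s₁* s₁ = s₂* s₂ = p, s₁ s₁* ≤ p, s₂ s₂* ≤ p, and (s₁ s₁*)(s₂ s₂*) = 0; and (c) 1 − p is subequivalent to p, i.e., there exists t ∈ A with t* t = 1 − p and t t* ≤ p. Then inf{‖x‖ : x ∈ C_A(a)} ≤ ε; that is, for every δ > 0 there exists x in the norm-closed convex hull of {v a v* : v a unitary element of A} with ‖x‖ ≤ ε + δ. -/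
/-- For `a` in a unital C*-algebra `A`, the norm-closed convex hull of
`{v * a * star v : v unitary in A}` (this is `C_A(a)`). -/
def dixmierSet {A : Type*} [NormedRing A] [StarRing A] [CStarRing A] [NormedAlgebra ℂ A]
    [CompleteSpace A] [StarModule ℂ A] (a : A) : Set A :=
  closure (convexHull ℝ {x : A | ∃ v ∈ unitary A, x = v * a * star v})

/-!
Averaging `a` with its conjugate by the symmetry `2p - 1` shows that the pinching
`b = pap + (1-p)a(1-p)` lies in the convex hull of the unitary orbit of `a`. Proper infiniteness of
`p` and `1 - p ≼ p` give partial isometries `Tᵢ = s₂ⁱ s₁ t` from `1 - p` into `p` with mutually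
orthogonal ranges. The self-adjoint unitary `uᵢ` exchanging `1 - p` with `Tᵢ Tᵢ*` moves the corner
`c = (1-p)a(1-p)` to `Tᵢ c Tᵢ*`, while `uᵢ (pap) uᵢ` keeps norm at most `ε`. Since the ranges are
orthogonal, `‖∑ Tᵢ c Tᵢ*‖ ≤ ‖c‖`, so the average of `uᵢ b uᵢ` over `N` indices lies in the hull and
has norm at most `ε + ‖c‖ / N`.
-/

open Finset

theorem IsStarProjection.mul_eq_of_star_mul_self_eq {A : Type*} [NonUnitalNormedRing A]
    [StarRing A] [CStarRing A] {s e : A} (he : IsStarProjection e) (h : star s * s = e) :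
    s * e = s := by
  rw [← sub_eq_zero, ← CStarRing.star_mul_self_eq_zero_iff]
  calc star (s * e - s) * (s * e - s)
      = star e * (star s * s) * e - star e * (star s * s) - star s * s * e + star s * s := by
        rw [star_sub, star_mul]; noncomm_ring
    _ = 0 := by
        rw [h, he.isSelfAdjoint.star_eq, he.isIdempotentElem.eq, he.isIdempotentElem.eq]; abel

section NonUnitalRing

variable {A : Type*} [NonUnitalRing A] [StarRing A]

theorem IsSelfAdjoint.mul_eq_of_mul_star_mul_eq {s p : A} (hp : IsSelfAdjoint p)
    (hs : s * star s * s = s) (h : s * star s * p = s * star s) : p * s = s := by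
  have h' : p * (s * star s) = s * star s := by
    simpa [star_mul, hp.star_eq, mul_assoc] using congrArg star h
  calc p * s = p * (s * star s) * s := by rw [mul_assoc, mul_assoc, ← mul_assoc s, hs]
    _ = s := by rw [h', hs]

theorem star_mul_eq_zero_of_mul_star_mul_mul_star_eq_zero {s₁ s₂ : A}
    (h₁ : s₁ * star s₁ * s₁ = s₁) (h₂ : s₂ * star s₂ * s₂ = s₂)
    (h : s₁ * star s₁ * (s₂ * star s₂) = 0) : star s₁ * s₂ = 0 :=
  calc star s₁ * s₂ = star (s₁ * star s₁ * s₁) * (s₂ * star s₂ * s₂) := by rw [h₁, h₂]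
    _ = star s₁ * (s₁ * star s₁ * (s₂ * star s₂)) * s₂ := by
        simp only [star_mul, star_star, mul_assoc]
    _ = 0 := by rw [h, mul_zero, zero_mul]

def IsOrthogonalIsometryFamily {ι : Type*} [DecidableEq ι] (q : A) (T : ι → A) : Prop :=
  ∀ i j, star (T i) * T j = if i = j then q else 0

namespace IsOrthogonalIsometryFamily

variable {ι : Type*} [DecidableEq ι] {q : A} {T : ι → A}

theorem mul_right {p t : A} (hT : IsOrthogonalIsometryFamily p T) (ht : star t * t = q)
    (hpt : p * t = t) : IsOrthogonalIsometryFamily q fun i ↦ T i * t := by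
  intro i j
  rw [star_mul, mul_assoc, ← mul_assoc (star (T i)), hT i j]
  split_ifs <;> simp [hpt, ht]

theorem sum_conj_mul_sum_conj (hT : IsOrthogonalIsometryFamily q T) (s : Finset ι) (x y : A) :
    (∑ i ∈ s, T i * x * star (T i)) * (∑ j ∈ s, T j * y * star (T j)) =
      ∑ i ∈ s, T i * (x * q * y) * star (T i) := by
  rw [sum_mul_sum]
  refine sum_congr rfl fun i hi ↦ ?_
  calc ∑ j ∈ s, T i * x * star (T i) * (T j * y * star (T j))
      = ∑ j ∈ s, T i * x * (star (T i) * T j) * y * star (T j) :=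
        sum_congr rfl fun j _ ↦ by noncomm_ring
    _ = _ := by
        simp only [hT i, mul_ite, ite_mul, mul_zero, zero_mul, sum_ite_eq, if_pos hi, mul_assoc]

end IsOrthogonalIsometryFamily

end NonUnitalRing

theorem mul_pow_mul_of_mul_eq {A : Type*} [Monoid A] {s₁ s₂ p : A} (hp₁ : p * s₁ = s₁)
    (hp₂ : p * s₂ = s₂) : ∀ i : ℕ, p * (s₂ ^ i * s₁) = s₂ ^ i * s₁
  | 0 => by simpa using hp₁
  | i + 1 => by rw [pow_succ', mul_assoc, ← mul_assoc p, hp₂]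

theorem isOrthogonalIsometryFamily_pow_mul {A : Type*} [Ring A] [StarRing A] {s₁ s₂ p : A}
    (h₁ : star s₁ * s₁ = p) (h₂ : star s₂ * s₂ = p) (hp₁ : p * s₁ = s₁) (hp₂ : p * s₂ = s₂)
    (h₁₂ : star s₁ * s₂ = 0) : IsOrthogonalIsometryFamily p fun i : ℕ ↦ s₂ ^ i * s₁ := by
  have h₀ : ∀ j, star s₁ * (s₂ ^ (j + 1) * s₁) = 0 := fun j ↦ by
    rw [pow_succ', mul_assoc, ← mul_assoc, h₁₂, zero_mul]
  intro i j
  induction i generalizing j with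
  | zero =>
    rcases j with _ | j
    · simpa using h₁
    · simpa using h₀ j
  | succ i ih =>
    rcases j with _ | j
    · simpa [star_mul] using congrArg star (h₀ i)
    · calc star (s₂ ^ (i + 1) * s₁) * (s₂ ^ (j + 1) * s₁)
          = star (s₂ ^ i * s₁) * (p * (s₂ ^ j * s₁)) := by
            simp only [pow_succ', star_mul, mul_assoc]; rw [← mul_assoc (star s₂), h₂]
        _ = _ := by rw [mul_pow_mul_of_mul_eq hp₁ hp₂, ih]; simp

theorem exists_isOrthogonalIsometryFamily_one_sub {A : Type*} [NormedRing A] [StarRing A]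
    [CStarRing A] {p s₁ s₂ t : A} (hp : IsStarProjection p)
    (hs₁ : star s₁ * s₁ = p) (hs₂ : star s₂ * s₂ = p)
    (hr₁ : s₁ * star s₁ * p = s₁ * star s₁) (hr₂ : s₂ * star s₂ * p = s₂ * star s₂)
    (h₁₂ : s₁ * star s₁ * (s₂ * star s₂) = 0)
    (ht : star t * t = 1 - p) (hrt : t * star t * p = t * star t) :
    ∃ T : ℕ → A, IsOrthogonalIsometryFamily (1 - p) T ∧ (∀ i, T i * p = 0) ∧
      ∀ i, p * T i = T i := by
  have hs₁' : s₁ * star s₁ * s₁ = s₁ := by rw [mul_assoc, hs₁, hp.mul_eq_of_star_mul_self_eq hs₁]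
  have hs₂' : s₂ * star s₂ * s₂ = s₂ := by rw [mul_assoc, hs₂, hp.mul_eq_of_star_mul_self_eq hs₂]
  have htq : t * (1 - p) = t := hp.one_sub.mul_eq_of_star_mul_self_eq ht
  have htp : t * p = 0 := by simpa [mul_sub] using htq
  have hpt : p * t = t :=
    hp.isSelfAdjoint.mul_eq_of_mul_star_mul_eq (by rw [mul_assoc, ht, htq]) hrt
  have hps₁ := hp.isSelfAdjoint.mul_eq_of_mul_star_mul_eq hs₁' hr₁
  have hps₂ := hp.isSelfAdjoint.mul_eq_of_mul_star_mul_eq hs₂' hr₂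
  have hW := isOrthogonalIsometryFamily_pow_mul hs₁ hs₂ hps₁ hps₂
    (star_mul_eq_zero_of_mul_star_mul_mul_star_eq_zero hs₁' hs₂' h₁₂)
  refine ⟨fun i ↦ s₂ ^ i * s₁ * t, hW.mul_right ht hpt, fun i ↦ by rw [mul_assoc, htp, mul_zero],
    fun i ↦ by rw [← mul_assoc, mul_pow_mul_of_mul_eq hps₁ hps₂]⟩

theorem IsOrthogonalIsometryFamily.norm_sum_conj_le {A ι : Type*} [NonUnitalCStarAlgebra A]
    [DecidableEq ι] {q c : A} {T : ι → A} (hT : IsOrthogonalIsometryFamily q T)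
    (hq : IsStarProjection q) (hc : q * c = c) (s : Finset ι) :
    ‖∑ i ∈ s, T i * c * star (T i)‖ ≤ ‖c‖ := by
  let _ := CStarAlgebra.spectralOrder A
  have _ := CStarAlgebra.spectralOrderedRing A
  set S := ∑ i ∈ s, T i * c * star (T i)
  set F := ∑ i ∈ s, T i * q * star (T i)
  have hTq : ∀ i, T i * q = T i := fun i ↦ hq.mul_eq_of_star_mul_self_eq (by simpa using hT i i)
  have hF : IsStarProjection F := by
    refine ⟨?_, ?_⟩
    · rw [IsIdempotentElem, hT.sum_conj_mul_sum_conj, hq.isIdempotentElem.eq,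
        hq.isIdempotentElem.eq]
    · simp only [F, IsSelfAdjoint, star_sum, star_mul, star_star, hq.isSelfAdjoint.star_eq,
        mul_assoc]
  have hSS : star S * S = ∑ i ∈ s, T i * (star c * c) * star (T i) := by
    have : star S = ∑ i ∈ s, T i * star c * star (T i) := by
      simp only [S, star_sum, star_mul, star_star, mul_assoc]
    rw [this, hT.sum_conj_mul_sum_conj, mul_assoc _ q, hc]
  have hle : star S * S ≤ ‖star c * c‖ • F := by
    rw [hSS, smul_sum]
    gcongr with i
    simpa [hTq] using CStarAlgebra.star_right_conjugate_le_norm_smul (a := T i)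
      (IsSelfAdjoint.star_mul_self c)
  have hS : ‖S‖ * ‖S‖ ≤ ‖c‖ * ‖c‖ :=
    calc ‖S‖ * ‖S‖ = ‖star S * S‖ := CStarRing.norm_star_mul_self.symm
      _ ≤ ‖‖star c * c‖ • F‖ :=
        CStarAlgebra.norm_le_norm_of_nonneg_of_le (star_mul_self_nonneg S) hle
      _ ≤ ‖c‖ * ‖c‖ := by
        rw [norm_smul, norm_norm, CStarRing.norm_star_mul_self]
        exact mul_le_of_le_one_right (by positivity) (hF.norm_le F)
  exact (mul_self_le_mul_self_iff (norm_nonneg _) (norm_nonneg _)).2 hS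

section SwapSymmetry

variable {A : Type*} [Ring A] [StarRing A]

/-- For `star T * T = 1 - p` and `p * T = T`, the self-adjoint unitary exchanging `1 - p` with
`T * star T` and fixing `p - T * star T`. -/
def swapSymmetry (p T : A) : A := T + star T + (p - T * star T)

variable {p T : A}

theorem isSelfAdjoint_swapSymmetry (hp : IsSelfAdjoint p) :
    IsSelfAdjoint (swapSymmetry p T) := by
  simp only [swapSymmetry, IsSelfAdjoint, star_add, star_sub, star_mul, star_star, hp.star_eq]
  abel

theorem swapSymmetry_mul_one_sub (hp : IsStarProjection p) (hTp : T * p = 0)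
    (hpT : p * T = T) : swapSymmetry p T * (1 - p) = T := by
  have hsTp : star T * p = star T := by
    simpa [star_mul, hp.isSelfAdjoint.star_eq] using congrArg star hpT
  simp only [swapSymmetry, add_mul, sub_mul, mul_sub, mul_one, mul_assoc, hTp, hsTp,
    hp.isIdempotentElem.eq]
  abel

theorem swapSymmetry_mul_self (hp : IsStarProjection p) (hT : star T * T = 1 - p)
    (hTp : T * p = 0) (hpT : p * T = T) : swapSymmetry p T * swapSymmetry p T = 1 := by
  have hsTp : star T * p = star T := by
    simpa [star_mul, hp.isSelfAdjoint.star_eq] using congrArg star hpT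
  have hpsT : p * star T = 0 := by
    simpa [star_mul, hp.isSelfAdjoint.star_eq] using congrArg star hTp
  have hTT : T * T = 0 := by rw [← hpT, mul_assoc, ← mul_assoc T, hTp, zero_mul, mul_zero]
  have hsTsT : star T * star T = 0 := by simpa [star_mul] using congrArg star hTT
  have hTsTT : T * star T * T = T := by rw [mul_assoc, hT, mul_sub, mul_one, hTp, sub_zero]
  have hTsTsT : T * star T * star T = 0 := by rw [mul_assoc, hsTsT, mul_zero]
  have hTsTp : T * star T * p = T * star T := by rw [mul_assoc, hsTp]
  simp only [swapSymmetry, add_mul, mul_add, sub_mul, mul_sub, ← mul_assoc, hTT, hsTsT, hT, hTp,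
    hpsT, hsTp, hpT, hTsTT, hTsTsT, hTsTp, hp.isIdempotentElem.eq, zero_mul, one_mul]
  abel

theorem swapSymmetry_mem_unitary (hp : IsStarProjection p) (hT : star T * T = 1 - p)
    (hTp : T * p = 0) (hpT : p * T = T) : swapSymmetry p T ∈ unitary A := by
  have h := swapSymmetry_mul_self hp hT hTp hpT
  rw [Unitary.mem_iff, (isSelfAdjoint_swapSymmetry hp.isSelfAdjoint).star_eq]
  exact ⟨h, h⟩

theorem swapSymmetry_conj (hp : IsStarProjection p) (hTp : T * p = 0) (hpT : p * T = T) {c : A}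
    (hc₁ : (1 - p) * c = c) (hc₂ : c * (1 - p) = c) :
    swapSymmetry p T * c * star (swapSymmetry p T) = T * c * star T := by
  calc swapSymmetry p T * c * star (swapSymmetry p T)
      = swapSymmetry p T * ((1 - p) * c * (1 - p)) * star (swapSymmetry p T) := by
        rw [hc₁, hc₂]
    _ = swapSymmetry p T * (1 - p) * c * star (swapSymmetry p T * (1 - p)) := by
        rw [star_mul, hp.one_sub.isSelfAdjoint.star_eq]; noncomm_ring
    _ = T * c * star T := by rw [swapSymmetry_mul_one_sub hp hTp hpT]

end SwapSymmetry

theorem norm_sum_swapSymmetry_conj_pinch_le {A ι : Type*} [CStarAlgebra A] [DecidableEq ι]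
    {p : A} {T : ι → A} (hp : IsStarProjection p) (hT : IsOrthogonalIsometryFamily (1 - p) T)
    (hTp : ∀ i, T i * p = 0) (hpT : ∀ i, p * T i = T i) (a : A) (s : Finset ι) :
    ‖∑ i ∈ s, swapSymmetry p (T i) * (p * a * p + (1 - p) * a * (1 - p)) *
      star (swapSymmetry p (T i))‖ ≤ #s * ‖p * a * p‖ + ‖(1 - p) * a * (1 - p)‖ := by
  set c := (1 - p) * a * (1 - p)
  have hc₁ : (1 - p) * c = c := by simp only [c, ← mul_assoc, hp.one_sub.isIdempotentElem.eq]
  have hc₂ : c * (1 - p) = c := by simp only [c, mul_assoc, hp.one_sub.isIdempotentElem.eq]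
  simp only [mul_add, add_mul, swapSymmetry_conj hp (hTp _) (hpT _) hc₁ hc₂, sum_add_distrib]
  refine (norm_add_le _ _).trans (add_le_add ?_ (hT.norm_sum_conj_le hp.one_sub hc₁ s))
  refine (norm_sum_le _ _).trans ?_
  rw [← nsmul_eq_mul, ← sum_const]
  refine sum_le_sum fun i _ ↦ ?_
  have hu := swapSymmetry_mem_unitary hp (by simpa using hT i i) (hTp i) (hpT i)
  rw [CStarRing.norm_mul_mem_unitary _ (Unitary.star_mem hu), CStarRing.norm_mem_unitary_mul _ hu]

def unitaryOrbit {A : Type*} [Monoid A] [StarMul A] (a : A) : Set A :=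
  {x | ∃ v ∈ unitary A, x = v * a * star v}

section UnitaryOrbit

variable {A : Type*} [Ring A] [StarRing A] [Module ℝ A]

theorem pinch_mem_convexHull_unitaryOrbit {p : A} (hp : IsStarProjection p) (a : A) :
    p * a * p + (1 - p) * a * (1 - p) ∈ convexHull ℝ (unitaryOrbit a) := by
  set u := 2 * p - 1
  have hu : star u = u := by simp [u, hp.isSelfAdjoint.star_eq, two_mul]
  have hmem : ∀ x ∈ ({a, u * a * star u} : Set A), x ∈ unitaryOrbit a := by
    rintro x (rfl | rfl)
    · exact ⟨1, one_mem _, by simp⟩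
    · exact ⟨u, hp.two_mul_sub_one_mem_unitary, rfl⟩
  have hpinch : p * a * p + (1 - p) * a * (1 - p) =
      (2 : ℝ)⁻¹ • a + (2 : ℝ)⁻¹ • (u * a * star u) := by
    have h : a + u * a * star u = (2 : ℝ) • (p * a * p + (1 - p) * a * (1 - p)) := by
      rw [hu, two_smul]; simp only [u]; noncomm_ring
    rw [← smul_add, h, inv_smul_smul₀ two_ne_zero]
  rw [hpinch]
  exact convexHull_mono hmem (convex_convexHull ℝ _ (subset_convexHull ℝ _ (by simp))
    (subset_convexHull ℝ _ (by simp)) (by norm_num) (by norm_num) (by norm_num))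

variable [IsScalarTower ℝ A A] [SMulCommClass ℝ A A]

theorem conj_mem_convexHull_unitaryOrbit {a y v : A} (hv : v ∈ unitary A)
    (hy : y ∈ convexHull ℝ (unitaryOrbit a)) :
    v * y * star v ∈ convexHull ℝ (unitaryOrbit a) := by
  let conj : A →ₗ[ℝ] A := LinearMap.mulRight ℝ (star v) ∘ₗ LinearMap.mulLeft ℝ v
  have hsub : conj '' unitaryOrbit a ⊆ unitaryOrbit a := by
    rintro _ ⟨_, ⟨w, hw, rfl⟩, rfl⟩
    exact ⟨v * w, mul_mem hv hw, by simp [conj, star_mul, mul_assoc]⟩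
  have : conj y ∈ convexHull ℝ (conj '' unitaryOrbit a) := by
    rw [← conj.image_convexHull]; exact Set.mem_image_of_mem _ hy
  exact convexHull_mono hsub this

theorem smul_sum_conj_mem_convexHull_unitaryOrbit {ι : Type*} {a y : A}
    (hy : y ∈ convexHull ℝ (unitaryOrbit a)) {u : ι → A} (hu : ∀ i, u i ∈ unitary A)
    {s : Finset ι} (hs : s.Nonempty) :
    (#s : ℝ)⁻¹ • ∑ i ∈ s, u i * y * star (u i) ∈ convexHull ℝ (unitaryOrbit a) := by
  rw [smul_sum]
  refine (convex_convexHull ℝ _).sum_mem (fun _ _ ↦ by positivity) ?_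
    (fun i _ ↦ conj_mem_convexHull_unitaryOrbit (hu i) hy)
  simp [hs.card_ne_zero]

end UnitaryOrbit

theorem dixmier_norm_le_of_properly_infinite_general
    {A : Type*} [NormedRing A] [StarRing A] [CStarRing A] [NormedAlgebra ℂ A]
    [CompleteSpace A] [StarModule ℂ A]
    (a : A) (ε : ℝ)
    (p : A) (hp_sa : IsSelfAdjoint p) (hp_idem : p * p = p)
    (hpap : ‖p * a * p‖ ≤ ε)
    (hp_propinf : ∃ s₁ s₂ : A,
      star s₁ * s₁ = p ∧ star s₂ * s₂ = p ∧
      (s₁ * star s₁) * p = s₁ * star s₁ ∧ (s₂ * star s₂) * p = s₂ * star s₂ ∧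
      (s₁ * star s₁) * (s₂ * star s₂) = 0)
    (hsub : ∃ t : A, star t * t = 1 - p ∧ (t * star t) * p = t * star t) :
    ∀ δ : ℝ, 0 < δ → ∃ x ∈ dixmierSet a, ‖x‖ ≤ ε + δ := by
  intro δ hδ
  let _ : CStarAlgebra A := {}
  have hp : IsStarProjection p := ⟨hp_idem, hp_sa⟩
  obtain ⟨s₁, s₂, hs₁, hs₂, hr₁, hr₂, h₁₂⟩ := hp_propinf
  obtain ⟨t, ht, hrt⟩ := hsub
  obtain ⟨T, hT, hTp, hpT⟩ :=
    exists_isOrthogonalIsometryFamily_one_sub hp hs₁ hs₂ hr₁ hr₂ h₁₂ ht hrt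
  set c := (1 - p) * a * (1 - p)
  obtain ⟨N, hN⟩ := exists_nat_gt (‖c‖ / δ)
  have hN₀ : (0 : ℝ) < N := (div_nonneg (norm_nonneg c) hδ.le).trans_lt hN
  have hs : (range N).Nonempty := nonempty_range_iff.2 (by exact_mod_cast hN₀.ne')
  refine ⟨_, subset_closure (smul_sum_conj_mem_convexHull_unitaryOrbit
    (pinch_mem_convexHull_unitaryOrbit hp a)
    (fun i ↦ swapSymmetry_mem_unitary hp (by simpa using hT i i) (hTp i) (hpT i)) hs), ?_⟩
  rw [norm_smul, card_range, norm_inv, Real.norm_natCast]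
  calc (N : ℝ)⁻¹ * ‖_‖ ≤ (N : ℝ)⁻¹ * (N * ‖p * a * p‖ + ‖c‖) := by
        gcongr; simpa using norm_sum_swapSymmetry_conj_pinch_le hp hT hTp hpT a (range N)
    _ = ‖p * a * p‖ + ‖c‖ / N := by field_simp
    _ ≤ ε + δ := by
        have : ‖c‖ / N < δ := (div_lt_iff₀ hN₀).2 (by rw [div_lt_iff₀ hδ] at hN; linarith)
        linarith

/-- Lemma 2.15: let `A` be a unital C*-algebra, `a ∈ A`, `ε > 0`, and let `p ∈ A` be a
properly infinite projection with `‖p a p‖ ≤ ε` and `1 - p ≼ p`.  Then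
`inf {‖x‖ : x ∈ C_A(a)} ≤ ε`. -/
theorem dixmier_norm_le_of_properly_infinite
    {A : Type*} [NormedRing A] [StarRing A] [CStarRing A] [NormedAlgebra ℂ A]
    [CompleteSpace A] [StarModule ℂ A]
    (a : A) (ε : ℝ) (hε : 0 < ε)
    (p : A) (hp_sa : IsSelfAdjoint p) (hp_idem : p * p = p)
    (hpap : ‖p * a * p‖ ≤ ε)
    (hp_propinf : ∃ s₁ s₂ : A,
      star s₁ * s₁ = p ∧ star s₂ * s₂ = p ∧
      (s₁ * star s₁) * p = s₁ * star s₁ ∧ (s₂ * star s₂) * p = s₂ * star s₂ ∧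
      (s₁ * star s₁) * (s₂ * star s₂) = 0)
    (hsub : ∃ t : A, star t * t = 1 - p ∧ (t * star t) * p = t * star t) :
    ∀ δ : ℝ, 0 < δ → ∃ x ∈ dixmierSet a, ‖x‖ ≤ ε + δ :=
  dixmier_norm_le_of_properly_infinite_general a ε p hp_sa hp_idem hpap hp_propinf hsub
end

section
/- Assume the abstract reduced crossed product setup for an action α : Γ → Aut(A) with (SAveP), with ambient C*-algebra B, unitaries (u_t), and conditional expectation E : B → A. Let x ∈ B be such that E(x) is central in A, i.e., E(x) a = a E(x) for all a ∈ A. Then E(x) ∈ C_A(x), the norm-closed convex hull in B of {v x v* : v a unitary element of A}. -/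
/-! An average `Φ y = ∑ wᵢ vᵢ y vᵢ*` over unitaries `vᵢ` of `A` is a contraction, fixes every
element commuting with `A`, and averages compose. On a monomial, `Φ (a u_t) = a' u_t` with
`a' ∈ C_A^{α_t}(a)`, so by (SAveP) any single monomial with `t ≠ e` can be averaged to almost `0`;
since averages keep `∑_{t ≠ e} A u_t` invariant, composing them kills a finite sum
`c = ∑_{t ≠ e} a_t u_t` one term at a time. Approximating `x` by `a + c` with `a ∈ A`, we get
`E(a + c) = a ≈ E x`, and the average `Ψ` killing `c` gives `Ψ x ≈ Ψ a ≈ Ψ (E x) = E x`. -/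

/-- For a unital C*-subalgebra `A` of `B`, a map `f` on `A`, and `b ∈ B`, the norm-closed
convex hull in `B` of `{v * b * star (f v) : v a unitary element of A}`.  For `f = id`
this is `C_A(b)`; for `f = β` an automorphism of `A` it is `C_A^β(b)`. -/
def relC {B : Type*} [NormedRing B] [StarRing B] [CStarRing B] [NormedAlgebra ℂ B]
    [CompleteSpace B] [StarModule ℂ B]
    (A : StarSubalgebra ℂ B) (f : ↥A → ↥A) (b : B) : Set B :=
  closure (convexHull ℝ
    {y : B | ∃ v : ↥A, v ∈ unitary ↥A ∧ y = (v : B) * b * star ((f v : ↥A) : B)})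

lemma mul_mem_convexHull {𝕜 R : Type*} [Field 𝕜] [LinearOrder 𝕜] [IsStrictOrderedRing 𝕜]
    [Ring R] [Module 𝕜 R] [IsScalarTower 𝕜 R R] [SMulCommClass 𝕜 R R] {s : Set R}
    (hs : ∀ a ∈ s, ∀ b ∈ s, a * b ∈ s) {x y : R} (hx : x ∈ convexHull 𝕜 s)
    (hy : y ∈ convexHull 𝕜 s) : x * y ∈ convexHull 𝕜 s := by
  have hx_mul : ∀ b ∈ s, x * b ∈ convexHull 𝕜 s := fun b hb =>
    convexHull_min (t := (· * b) ⁻¹' convexHull 𝕜 s)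
      (fun a ha => subset_convexHull 𝕜 s (hs a ha b hb))
      ((convex_convexHull 𝕜 s).is_linear_preimage
        ⟨fun _ _ => add_mul _ _ _, fun _ _ => smul_mul_assoc _ _ _⟩) hx
  exact convexHull_min (t := (x * ·) ⁻¹' convexHull 𝕜 s) hx_mul
    ((convex_convexHull 𝕜 s).is_linear_preimage
      ⟨fun _ _ => mul_add _ _ _, fun _ _ => mul_smul_comm _ _ _⟩) hy

section

variable {B : Type*} [NormedRing B] [StarRing B] [NormedAlgebra ℂ B] [StarModule ℂ B]

def unitaryAverages (A : StarSubalgebra ℂ B) : Set (Module.End ℂ B) :=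
  convexHull ℝ
    {Φ | ∃ v : ↥A, v ∈ unitary ↥A ∧ Φ = LinearMap.mulLeftRight ℂ ((v : B), star (v : B))}

lemma StarSubalgebra.coe_mem_unitary {A : StarSubalgebra ℂ B} {v : ↥A} (hv : v ∈ unitary ↥A) :
    (v : B) ∈ unitary B :=
  Unitary.map_mem A.subtype hv

namespace unitaryAverages

variable {A : StarSubalgebra ℂ B}

lemma one_mem : (1 : Module.End ℂ B) ∈ unitaryAverages A :=
  subset_convexHull ℝ _ ⟨1, Submonoid.one_mem _, by ext; simp⟩

lemma mul_mem {Φ Ψ : Module.End ℂ B} (hΦ : Φ ∈ unitaryAverages A)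
    (hΨ : Ψ ∈ unitaryAverages A) : Φ * Ψ ∈ unitaryAverages A := by
  refine mul_mem_convexHull ?_ hΦ hΨ
  rintro _ ⟨v, hv, rfl⟩ _ ⟨w, hw, rfl⟩
  refine ⟨v * w, Submonoid.mul_mem _ hv hw, ?_⟩
  ext y
  simp [mul_assoc]

lemma norm_apply_le [CStarRing B] {Φ : Module.End ℂ B} (hΦ : Φ ∈ unitaryAverages A) (y : B) :
    ‖Φ y‖ ≤ ‖y‖ := by
  refine mem_closedBall_zero_iff.mp <| convexHull_min ?_
    ((convex_closedBall 0 ‖y‖).is_linear_preimage (f := fun Φ : Module.End ℂ B => Φ y)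
      ⟨fun _ _ => rfl, fun _ _ => rfl⟩) hΦ
  rintro _ ⟨v, hv, rfl⟩
  rw [Set.mem_preimage, mem_closedBall_zero_iff, LinearMap.mulLeftRight_apply,
    CStarRing.norm_mul_mem_unitary _ (Unitary.star_mem (StarSubalgebra.coe_mem_unitary hv)),
    CStarRing.norm_mem_unitary_mul _ (StarSubalgebra.coe_mem_unitary hv)]

lemma apply_eq_self {Φ : Module.End ℂ B} (hΦ : Φ ∈ unitaryAverages A) {z : B}
    (hz : ∀ a ∈ A, z * a = a * z) : Φ z = z := by
  refine convexHull_min (t := {Φ : Module.End ℂ B | Φ z = z}) ?_ ?_ hΦ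
  · rintro _ ⟨v, hv, rfl⟩
    rw [Set.mem_ofPred_eq, LinearMap.mulLeftRight_apply, ← hz _ v.2, mul_assoc,
      Unitary.mul_star_self_of_mem (StarSubalgebra.coe_mem_unitary hv), mul_one]
  · intro Φ hΦ Ψ hΨ a b _ _ hab
    simp_all [← add_smul]

lemma image_apply (f : B →ₗ[ℝ] B) (y : B) :
    (fun Φ : Module.End ℂ B => f (Φ y)) '' unitaryAverages A =
      convexHull ℝ {z | ∃ v : ↥A, v ∈ unitary ↥A ∧ z = f ((v : B) * y * star (v : B))} := by
  rw [unitaryAverages, IsLinearMap.image_convexHull ⟨fun _ _ => by simp, fun _ _ => by simp⟩]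
  congr 1
  ext z
  simp [eq_comm]

lemma apply_mem_convexHull {Φ : Module.End ℂ B}
    (hΦ : Φ ∈ unitaryAverages A) (y : B) :
    Φ y ∈ convexHull ℝ {z | ∃ v : ↥A, v ∈ unitary ↥A ∧ z = (v : B) * y * star (v : B)} := by
  have h := Set.mem_image_of_mem (fun Φ : Module.End ℂ B => LinearMap.id (R := ℝ) (Φ y)) hΦ
  rwa [image_apply] at h

lemma norm_apply_sub_le [CStarRing B] {Ψ : Module.End ℂ B} (hΨ : Ψ ∈ unitaryAverages A)
    {E : B →L[ℂ] B} (hEnorm : ‖E‖ ≤ 1) {x : B} (hx : ∀ a ∈ A, E x * a = a * E x) {a c : B}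
    (hE : E (a + c) = a) : ‖Ψ x - E x‖ ≤ 2 * ‖x - (a + c)‖ + ‖Ψ c‖ := by
  have hsplit : Ψ x - E x = Ψ (x - (a + c)) + Ψ c + Ψ (E (a + c - x)) := by
    rw [map_sub E, hE, map_sub Ψ, map_sub Ψ, apply_eq_self hΨ hx, map_add]
    abel
  have hE_le : ‖Ψ (E (a + c - x))‖ ≤ ‖x - (a + c)‖ := by
    rw [norm_sub_rev x]
    exact (norm_apply_le hΨ _).trans ((E.le_of_opNorm_le hEnorm _).trans_eq (one_mul _))
  rw [hsplit]
  linarith [norm_add₃_le (a := Ψ (x - (a + c))) (b := Ψ c) (c := Ψ (E (a + c - x))),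
    norm_apply_le hΨ (x - (a + c))]

end unitaryAverages

section CrossedProduct

variable {Γ : Type*} [Group Γ] {A : StarSubalgebra ℂ B} {u : Γ →* unitary B}

noncomputable def offIdentitySpan (A : StarSubalgebra ℂ B) (u : Γ →* unitary B) : Submodule ℂ B :=
  Submodule.span ℂ {y | ∃ a ∈ A, ∃ t ≠ 1, y = a * (u t : B)}

lemma span_le_sup_offIdentitySpan :
    Submodule.span ℂ {y : B | ∃ a ∈ A, ∃ t : Γ, y = a * (u t : B)} ≤
      Subalgebra.toSubmodule A.toSubalgebra ⊔ offIdentitySpan A u := by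
  refine Submodule.span_le.mpr ?_
  rintro _ ⟨a, ha, t, rfl⟩
  by_cases ht : t = 1
  · subst ht
    exact Submodule.mem_sup_left (by simpa using ha)
  · exact Submodule.mem_sup_right (Submodule.subset_span ⟨a, ha, t, ht, rfl⟩)

lemma apply_eq_zero_of_mem_offIdentitySpan {E : B →L[ℂ] B}
    (hEt : ∀ a ∈ A, ∀ t : Γ, t ≠ 1 → E (a * (u t : B)) = 0) {c : B}
    (hc : c ∈ offIdentitySpan A u) : E c = 0 := by
  refine (Submodule.span_le (p := LinearMap.ker (E : B →ₗ[ℂ] B))).mpr ?_ hc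
  rintro _ ⟨a, ha, t, ht, rfl⟩
  exact hEt a ha t ht

namespace unitaryAverages

variable {α : Γ → (↥A ≃⋆ₐ[ℂ] ↥A)}
  (hαu : ∀ (t : Γ) (a : ↥A), ((α t a : ↥A) : B) = (u t : B) * (a : B) * star (u t : B))

include hαu in
lemma image_apply_mul_unitary (a : B) (t : Γ) :
    (fun Φ : Module.End ℂ B => Φ (a * u t) * star (u t : B)) '' unitaryAverages A =
      convexHull ℝ {z | ∃ v : ↥A, v ∈ unitary ↥A ∧ z = (v : B) * a * star ((α t v : ↥A) : B)} := by
  refine (image_apply (LinearMap.mulRight ℝ (star (u t : B))) _).trans ?_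
  congr 1
  ext z
  simp [hαu, mul_assoc]

include hαu in
lemma exists_apply_mul_unitary_eq {Φ : Module.End ℂ B}
    (hΦ : Φ ∈ unitaryAverages A) {a : B} (ha : a ∈ A) (t : Γ) :
    ∃ a' ∈ A, Φ (a * u t) = a' * u t := by
  have hmem := Set.mem_image_of_mem (fun Φ : Module.End ℂ B => Φ (a * u t) * star (u t : B)) hΦ
  rw [image_apply_mul_unitary hαu] at hmem
  refine ⟨_, convexHull_min (t := (A : Set B)) ?_
    (A.toSubalgebra.toSubmodule.restrictScalars ℝ).convex hmem, ?_⟩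
  · rintro _ ⟨v, -, rfl⟩
    exact MulMemClass.mul_mem (MulMemClass.mul_mem v.2 ha) (star_mem (α t v).2)
  · rw [mul_assoc, Unitary.coe_star_mul_self, mul_one]

include hαu in
lemma exists_norm_apply_mul_unitary_lt [CStarRing B] [CompleteSpace B]
    (hSAveP : ∀ t : Γ, t ≠ 1 → ∀ b ∈ A, (0 : B) ∈ relC A (⇑(α t)) b)
    {a : B} (ha : a ∈ A) {t : Γ} (ht : t ≠ 1) {ε : ℝ} (hε : 0 < ε) :
    ∃ Φ ∈ unitaryAverages A, ‖Φ (a * u t)‖ < ε := by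
  obtain ⟨_, hw, hw_lt⟩ := Metric.mem_closure_iff.mp (hSAveP t ht a ha) ε hε
  rw [← image_apply_mul_unitary hαu] at hw
  obtain ⟨Φ, hΦ, rfl⟩ := hw
  refine ⟨Φ, hΦ, ?_⟩
  rwa [dist_zero_left, CStarRing.norm_mul_mem_unitary _ (Unitary.star_mem (u t).2)] at hw_lt

include hαu in
lemma exists_norm_apply_lt_of_mem_offIdentitySpan [CStarRing B] [CompleteSpace B]
    (hSAveP : ∀ t : Γ, t ≠ 1 → ∀ b ∈ A, (0 : B) ∈ relC A (⇑(α t)) b)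
    {c : B} (hc : c ∈ offIdentitySpan A u) {Φ : Module.End ℂ B} (hΦ : Φ ∈ unitaryAverages A)
    {ε : ℝ} (hε : 0 < ε) : ∃ Ψ ∈ unitaryAverages A, ‖Ψ (Φ c)‖ < ε := by
  -- Generalizing over `Φ` lets the `add` step average `c₂` after `c₁` has already been made small.
  induction hc using Submodule.span_induction generalizing Φ ε with
  | mem _ hy =>
    obtain ⟨a, ha, t, ht, rfl⟩ := hy
    obtain ⟨a', ha', hΦa⟩ := exists_apply_mul_unitary_eq hαu hΦ ha t
    rw [hΦa]
    exact exists_norm_apply_mul_unitary_lt hαu hSAveP ha' ht hε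
  | zero => exact ⟨1, one_mem, by simpa using hε⟩
  | add c₁ c₂ _ _ ih₁ ih₂ =>
    obtain ⟨Ψ₁, hΨ₁, h₁⟩ := ih₁ hΦ (half_pos hε)
    obtain ⟨Ψ₂, hΨ₂, h₂⟩ := ih₂ (mul_mem hΨ₁ hΦ) (half_pos hε)
    refine ⟨Ψ₂ * Ψ₁, mul_mem hΨ₂ hΨ₁, ?_⟩
    calc ‖(Ψ₂ * Ψ₁) (Φ (c₁ + c₂))‖ = ‖Ψ₂ (Ψ₁ (Φ c₁)) + Ψ₂ ((Ψ₁ * Φ) c₂)‖ := by simp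
      _ ≤ ‖Ψ₁ (Φ c₁)‖ + ‖Ψ₂ ((Ψ₁ * Φ) c₂)‖ := norm_add_le_of_le (norm_apply_le hΨ₂ _) le_rfl
      _ < ε / 2 + ε / 2 := add_lt_add h₁ h₂
      _ = ε := add_halves ε
  | smul z c _ ih =>
    obtain ⟨Ψ, hΨ, h⟩ := ih hΦ (div_pos hε (by positivity : 0 < ‖z‖ + 1))
    refine ⟨Ψ, hΨ, ?_⟩
    calc ‖Ψ (Φ (z • c))‖ = ‖z‖ * ‖Ψ (Φ c)‖ := by simp [norm_smul]
      _ ≤ (‖z‖ + 1) * ‖Ψ (Φ c)‖ := by gcongr; linarith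
      _ < ε := (lt_div_iff₀' (by positivity)).mp h

end unitaryAverages

end CrossedProduct

end

theorem central_expectation_mem_dixmierSet_general
    {B : Type*} [NormedRing B] [StarRing B] [CStarRing B] [NormedAlgebra ℂ B]
    [CompleteSpace B] [StarModule ℂ B]
    {Γ : Type*} [Group Γ]
    (A : StarSubalgebra ℂ B)
    (u : Γ →* unitary B)
    (α : Γ → (↥A ≃⋆ₐ[ℂ] ↥A))
    (hαu : ∀ (t : Γ) (a : ↥A), ((α t a : ↥A) : B) = (u t : B) * (a : B) * star (u t : B))
    (hdense : Dense (↑(Submodule.span ℂ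
      {x : B | ∃ a ∈ A, ∃ t : Γ, x = a * (u t : B)}) : Set B))
    (E : B →L[ℂ] B) (hEnorm : ‖E‖ ≤ 1)
    (hEe : ∀ a ∈ A, E (a * (u 1 : B)) = a)
    (hEt : ∀ a ∈ A, ∀ t : Γ, t ≠ 1 → E (a * (u t : B)) = 0)
    (hSAveP : ∀ t : Γ, t ≠ 1 → ∀ b ∈ A, (0 : B) ∈ relC A (⇑(α t)) b)
    (x : B) (hx : ∀ a ∈ A, E x * a = a * E x) :
    E x ∈ relC A id x := by
  refine Metric.mem_closure_iff.mpr fun ε hε => ?_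
  obtain ⟨_, hy, hxy⟩ := Metric.mem_closure_iff.mp (hdense x) (ε / 3) (by positivity)
  obtain ⟨a, ha, c, hc, rfl⟩ := Submodule.mem_sup.mp (span_le_sup_offIdentitySpan hy)
  replace ha : a ∈ A := ha
  have hE : E (a + c) = a := by
    simpa [apply_eq_zero_of_mem_offIdentitySpan hEt hc] using hEe a ha
  obtain ⟨Ψ, hΨ, hΨc⟩ := unitaryAverages.exists_norm_apply_lt_of_mem_offIdentitySpan hαu hSAveP
    hc unitaryAverages.one_mem (by positivity : 0 < ε / 3)
  refine ⟨Ψ x, unitaryAverages.apply_mem_convexHull hΨ x, ?_⟩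
  rw [Module.End.one_apply] at hΨc
  rw [dist_eq_norm] at hxy
  rw [dist_comm, dist_eq_norm]
  linarith [unitaryAverages.norm_apply_sub_le hΨ hEnorm hx hE]

/-- Lemma 3.1 (i): in the abstract reduced crossed product setup for an action
`α : Γ → Aut(A)` with (SAveP), with ambient C*-algebra `B`, implementing unitaries `u_t`
and canonical conditional expectation `E`, if `x ∈ B` and `E(x)` is central in `A`, then
`E(x) ∈ C_A(x)`. -/
theorem central_expectation_mem_dixmierSet
    {B : Type*} [NormedRing B] [StarRing B] [CStarRing B] [NormedAlgebra ℂ B]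
    [CompleteSpace B] [StarModule ℂ B]
    {Γ : Type*} [Group Γ]
    (A : StarSubalgebra ℂ B) (hA : IsClosed (A : Set B))
    (u : Γ →* unitary B)
    (α : Γ → (↥A ≃⋆ₐ[ℂ] ↥A))
    (hαu : ∀ (t : Γ) (a : ↥A), ((α t a : ↥A) : B) = (u t : B) * (a : B) * star (u t : B))
    (hdense : Dense (↑(Submodule.span ℂ
      {x : B | ∃ a ∈ A, ∃ t : Γ, x = a * (u t : B)}) : Set B))
    (E : B →L[ℂ] B) (hEmem : ∀ x : B, E x ∈ A) (hEnorm : ‖E‖ ≤ 1)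
    (hEe : ∀ a ∈ A, E (a * (u 1 : B)) = a)
    (hEt : ∀ a ∈ A, ∀ t : Γ, t ≠ 1 → E (a * (u t : B)) = 0)
    (hSAveP : ∀ t : Γ, t ≠ 1 → ∀ b ∈ A, (0 : B) ∈ relC A (⇑(α t)) b)
    (x : B) (hx : ∀ a ∈ A, E x * a = a * E x) :
    E x ∈ relC A id x :=
  central_expectation_mem_dixmierSet_general A u α hαu hdense E hEnorm hEe hEt hSAveP x hx
end

section
/- Assume the abstract reduced crossed product setup for an action α : Γ → Aut(A) with (SAveP), with ambient C*-algebra B, unitaries (u_t), and conditional expectation E : B → A. Let x ∈ B and t ∈ Γ be such that E_t(x) = 1_A. Then u_t ∈ C_A^{α_{t⁻¹}}(x), the norm-closed convex hull in B of {v x α_{t⁻¹}(v)* : v a unitary element of A}. -/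
open ContinuousLinearMap (mulLeftRight mulLeftRight_apply)

theorem convexHull_image2_subset {𝕜 E F G : Type*} [CommSemiring 𝕜] [PartialOrder 𝕜]
    [AddCommMonoid E] [AddCommMonoid F] [AddCommMonoid G]
    [Module 𝕜 E] [Module 𝕜 F] [Module 𝕜 G] (f : E →ₗ[𝕜] F →ₗ[𝕜] G) (s : Set E) (t : Set F) :
    Set.image2 (fun x y => f x y) (convexHull 𝕜 s) (convexHull 𝕜 t) ⊆
      convexHull 𝕜 (Set.image2 (fun x y => f x y) s t) := by
  rintro _ ⟨x, hx, y, hy, rfl⟩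
  have hs : ∀ x ∈ s, ∀ y ∈ convexHull 𝕜 t,
      f x y ∈ convexHull 𝕜 (Set.image2 (fun x y => f x y) s t) := fun x hx =>
    convexHull_min (fun y hy => subset_convexHull 𝕜 _ (Set.mem_image2_of_mem hx hy))
      ((convex_convexHull 𝕜 _).linear_preimage (f x))
  exact convexHull_min (fun x hx => hs x hx y hy)
    ((convex_convexHull 𝕜 _).linear_preimage (f.flip y)) hx

section AveragesToZero

variable {𝕜 E : Type*} [NontriviallyNormedField 𝕜] [NormedAddCommGroup E] [NormedSpace 𝕜 E]
  (S : Submonoid (E →L[𝕜] E))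

def averagesToZero : Set E :=
  {z | ∀ Φ ∈ S, ∀ ε > 0, ∃ Ψ ∈ S, ‖Ψ (Φ z)‖ < ε}

variable {S}

theorem zero_mem_averagesToZero : (0 : E) ∈ averagesToZero S :=
  fun Φ hΦ ε hε => ⟨Φ, hΦ, by simpa using hε⟩

theorem smul_mem_averagesToZero (c : 𝕜) {z : E} (hz : z ∈ averagesToZero S) :
    c • z ∈ averagesToZero S := by
  intro Φ hΦ ε hε
  have hc : 0 < ‖c‖ + 1 := by positivity
  obtain ⟨Ψ, hΨ, hlt⟩ := hz Φ hΦ (ε / (‖c‖ + 1)) (div_pos hε hc)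
  refine ⟨Ψ, hΨ, ?_⟩
  calc ‖Ψ (Φ (c • z))‖ = ‖c‖ * ‖Ψ (Φ z)‖ := by rw [map_smul, map_smul, norm_smul]
    _ ≤ (‖c‖ + 1) * ‖Ψ (Φ z)‖ := by gcongr; linarith
    _ < (‖c‖ + 1) * (ε / (‖c‖ + 1)) := by gcongr
    _ = ε := mul_div_cancel₀ ε hc.ne'

variable (hS : ∀ Φ ∈ S, ‖Φ‖ ≤ 1)
include hS

theorem add_mem_averagesToZero {z₁ z₂ : E} (h₁ : z₁ ∈ averagesToZero S)
    (h₂ : z₂ ∈ averagesToZero S) : z₁ + z₂ ∈ averagesToZero S := by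
  intro Φ hΦ ε hε
  obtain ⟨Ψ₁, hΨ₁, hlt₁⟩ := h₁ Φ hΦ (ε / 2) (half_pos hε)
  obtain ⟨Ψ₂, hΨ₂, hlt₂⟩ := h₂ (Ψ₁ * Φ) (mul_mem hΨ₁ hΦ) (ε / 2) (half_pos hε)
  refine ⟨Ψ₂ * Ψ₁, mul_mem hΨ₂ hΨ₁, ?_⟩
  have hΨ₂_le : ‖Ψ₂ (Ψ₁ (Φ z₁))‖ ≤ ‖Ψ₁ (Φ z₁)‖ :=
    (Ψ₂.le_of_opNorm_le (hS Ψ₂ hΨ₂) _).trans_eq (one_mul _)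
  calc ‖(Ψ₂ * Ψ₁) (Φ (z₁ + z₂))‖ = ‖Ψ₂ (Ψ₁ (Φ z₁)) + Ψ₂ (Ψ₁ (Φ z₂))‖ := by
        simp only [mul_apply_eq_comp, map_add]
    _ ≤ ‖Ψ₂ (Ψ₁ (Φ z₁))‖ + ‖Ψ₂ (Ψ₁ (Φ z₂))‖ := norm_add_le _ _
    _ < ε / 2 + ε / 2 := add_lt_add_of_le_of_lt (hΨ₂_le.trans hlt₁.le) hlt₂
    _ = ε := add_halves ε

theorem isClosed_averagesToZero : IsClosed (averagesToZero S) := by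
  refine isClosed_of_closure_subset fun z hz Φ hΦ ε hε => ?_
  obtain ⟨z', hz', hzz'⟩ := Metric.mem_closure_iff.1 hz (ε / 2) (half_pos hε)
  obtain ⟨Ψ, hΨ, hlt⟩ := hz' Φ hΦ (ε / 2) (half_pos hε)
  refine ⟨Ψ, hΨ, ?_⟩
  have hdiff : ‖(Ψ * Φ) (z - z')‖ ≤ ‖z - z'‖ :=
    ((Ψ * Φ).le_of_opNorm_le (hS _ (mul_mem hΨ hΦ)) _).trans_eq (one_mul _)
  calc ‖Ψ (Φ z)‖ ≤ ‖Ψ (Φ z')‖ + ‖(Ψ * Φ) (z - z')‖ := by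
        simpa only [mul_apply_eq_comp, map_sub] using norm_le_norm_add_norm_sub' _ _
    _ < ε / 2 + ε / 2 := add_lt_add_of_lt_of_le hlt (hdiff.trans (dist_eq_norm z z' ▸ hzz'.le))
    _ = ε := add_halves ε

end AveragesToZero

section DixmierAverages

variable {B : Type*} [NormedRing B] [StarRing B] [NormedAlgebra ℂ B] [StarModule ℂ B]

noncomputable def compBilinReal : (B →L[ℂ] B) →ₗ[ℝ] (B →L[ℂ] B) →ₗ[ℝ] (B →L[ℂ] B) :=
  LinearMap.mk₂ ℝ (· * ·) add_mul (fun r Φ Ψ => ContinuousLinearMap.smul_comp r Φ Ψ) mul_add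
    (fun r Φ Ψ => ContinuousLinearMap.comp_smul Φ r Ψ)

noncomputable def dixmierAverages (A : StarSubalgebra ℂ B) : Submonoid (B →L[ℂ] B) where
  carrier := convexHull ℝ ((fun v : A => mulLeftRight ℂ B v (star v)) '' unitary A)
  mul_mem' {Φ Ψ} hΦ hΨ := by
    refine convexHull_mono ?_
      (convexHull_image2_subset compBilinReal _ _ (Set.mem_image2_of_mem hΦ hΨ))
    rintro _ ⟨_, ⟨v, hv, rfl⟩, _, ⟨w, hw, rfl⟩, rfl⟩
    exact ⟨v * w, mul_mem hv hw, by ext; simp [compBilinReal, mul_assoc]⟩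
  one_mem' := subset_convexHull ℝ _ ⟨1, one_mem _, by ext; simp⟩

variable {A : StarSubalgebra ℂ B} {Φ : B →L[ℂ] B}

theorem apply_one_of_mem_dixmierAverages (hΦ : Φ ∈ dixmierAverages A) : Φ 1 = 1 := by
  have hlin : IsLinearMap ℝ fun Ψ : B →L[ℂ] B => Ψ 1 := ⟨fun _ _ => rfl, fun _ _ => rfl⟩
  refine convexHull_min ?_ ((convex_singleton (1 : B)).is_linear_preimage hlin) hΦ
  rintro _ ⟨v, hv, rfl⟩
  simpa using (Unitary.map_mem A.subtype hv).2

theorem norm_le_one_of_mem_dixmierAverages [CStarRing B] (hΦ : Φ ∈ dixmierAverages A) :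
    ‖Φ‖ ≤ 1 := by
  suffices (dixmierAverages A : Set (B →L[ℂ] B)) ⊆ Metric.closedBall 0 1 by
    simpa using this hΦ
  refine convexHull_min ?_ (convex_closedBall 0 1)
  rintro _ ⟨v, hv, rfl⟩
  have hv' : (v : B) ∈ unitary B := Unitary.map_mem A.subtype hv
  refine mem_closedBall_zero_iff.2 (ContinuousLinearMap.opNorm_le_bound _ zero_le_one fun z => ?_)
  rw [mulLeftRight_apply, CStarRing.norm_mul_mem_unitary _ (Unitary.star_mem hv'),
    CStarRing.norm_mem_unitary_mul _ hv', one_mul]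

end DixmierAverages

section CrossedProduct

variable {B : Type*} [NormedRing B] [StarRing B] [NormedAlgebra ℂ B] [StarModule ℂ B]
  {Γ : Type*} [Group Γ] {A : StarSubalgebra ℂ B}
  {u : Γ →* unitary B} {α : Γ → (A ≃⋆ₐ[ℂ] A)}
  (hαu : ∀ (t : Γ) (a : A), ((α t a : A) : B) = (u t : B) * (a : B) * star (u t : B))
include hαu

theorem mulLeftRight_mul_unitary_mul_star (s : Γ) (v : A) (b : B) :
    mulLeftRight ℂ B v (star v) (b * u s) * star (u s : B) = v * b * star ((α s v : A) : B) := by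
  simp [hαu, star_mul, mul_assoc]

theorem image_dixmierAverages (s : Γ) (b : B) :
    (fun Φ : B →L[ℂ] B => Φ (b * u s) * star (u s : B)) '' dixmierAverages A =
      convexHull ℝ {y | ∃ v : A, v ∈ unitary A ∧ y = v * b * star ((α s v : A) : B)} := by
  have hlin : IsLinearMap ℝ fun Φ : B →L[ℂ] B => Φ (b * u s) * star (u s : B) :=
    ⟨fun _ _ => add_mul _ _ _, fun _ _ => smul_mul_assoc _ _ _⟩
  change _ '' convexHull ℝ _ = _
  rw [hlin.image_convexHull, Set.image_image]
  congr 1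
  ext y
  exact exists_congr fun v => and_congr_right fun _ => by
    rw [← mulLeftRight_mul_unitary_mul_star hαu, eq_comm]

theorem apply_mul_unitary_mul_star_mem {Φ : B →L[ℂ] B} (hΦ : Φ ∈ dixmierAverages A)
    {b : B} (hb : b ∈ A) (s : Γ) : Φ (b * u s) * star (u s : B) ∈ A := by
  have hA : Convex ℝ (A : Set B) := (A.toSubalgebra.toSubmodule.restrictScalars ℝ).convex
  suffices h : (fun Φ : B →L[ℂ] B => Φ (b * u s) * star (u s : B)) '' dixmierAverages A ⊆ A from
    h ⟨Φ, hΦ, rfl⟩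
  rw [image_dixmierAverages hαu]
  refine convexHull_min ?_ hA
  rintro _ ⟨v, -, rfl⟩
  exact mul_mem (mul_mem v.2 hb) (star (α s v)).2

variable [CStarRing B] [CompleteSpace B]

theorem relC_eq_closure_image (s : Γ) (b : B) :
    relC A (α s) b =
      closure ((fun Φ : B →L[ℂ] B => Φ (b * u s) * star (u s : B)) '' dixmierAverages A) := by
  rw [image_dixmierAverages hαu]
  rfl

theorem exists_norm_apply_mul_unitary_lt {s : Γ} {c : B} (h0 : (0 : B) ∈ relC A (α s) c)
    {ε : ℝ} (hε : 0 < ε) : ∃ Φ ∈ dixmierAverages A, ‖Φ (c * u s)‖ < ε := by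
  rw [relC_eq_closure_image hαu] at h0
  obtain ⟨_, ⟨Φ, hΦ, rfl⟩, hlt⟩ := Metric.mem_closure_iff.1 h0 ε hε
  rw [dist_zero_left, CStarRing.norm_mul_mem_unitary _ (Unitary.star_mem (u s).2)] at hlt
  exact ⟨Φ, hΦ, hlt⟩

theorem mul_unitary_mem_averagesToZero {s : Γ} (hSAveP : ∀ c ∈ A, (0 : B) ∈ relC A (α s) c)
    {b : B} (hb : b ∈ A) : b * u s ∈ averagesToZero (dixmierAverages A) := by
  intro Φ hΦ ε hε
  set c := Φ (b * u s) * star (u s : B)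
  have hc : Φ (b * u s) = c * u s := by
    simp only [c, mul_assoc, Unitary.coe_star_mul_self, mul_one]
  rw [hc]
  exact exists_norm_apply_mul_unitary_lt hαu
    (hSAveP c (apply_mul_unitary_mul_star_mem hαu hΦ hb s)) hε

theorem sub_condExp_mem_averagesToZero
    (hdense : Dense (Submodule.span ℂ {x : B | ∃ a ∈ A, ∃ t : Γ, x = a * (u t : B)} : Set B))
    {E : B →L[ℂ] B} (hEe : ∀ a ∈ A, E (a * (u 1 : B)) = a)
    (hEt : ∀ a ∈ A, ∀ t : Γ, t ≠ 1 → E (a * (u t : B)) = 0)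
    (hSAveP : ∀ t : Γ, t ≠ 1 → ∀ b ∈ A, (0 : B) ∈ relC A (α t) b) (z : B) :
    z - E z ∈ averagesToZero (dixmierAverages A) := by
  have hS : ∀ Φ ∈ dixmierAverages A, ‖Φ‖ ≤ 1 := fun _ => norm_le_one_of_mem_dixmierAverages
  have hclosed : IsClosed {z : B | z - E z ∈ averagesToZero (dixmierAverages A)} :=
    (isClosed_averagesToZero hS).preimage (continuous_id.sub E.continuous)
  refine closure_minimal (fun z hz => ?_) hclosed (hdense z)
  change z - E z ∈ averagesToZero (dixmierAverages A)
  induction hz using Submodule.span_induction with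
  | mem z hz =>
    obtain ⟨a, ha, s, rfl⟩ := hz
    by_cases hs : s = 1
    · subst hs
      rw [hEe a ha, map_one, OneMemClass.coe_one, mul_one, sub_self]
      exact zero_mem_averagesToZero
    · rw [hEt a ha s hs, sub_zero]
      exact mul_unitary_mem_averagesToZero hαu (hSAveP s hs) ha
  | zero => simpa using zero_mem_averagesToZero (S := dixmierAverages A)
  | add z₁ z₂ _ _ h₁ h₂ =>
    rw [map_add, add_sub_add_comm]
    exact add_mem_averagesToZero hS h₁ h₂
  | smul c z _ h =>
    rw [map_smul, ← smul_sub]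
    exact smul_mem_averagesToZero c h

end CrossedProduct

theorem unitary_mem_twisted_dixmierSet_general
    {B : Type*} [NormedRing B] [StarRing B] [CStarRing B] [NormedAlgebra ℂ B]
    [CompleteSpace B] [StarModule ℂ B]
    {Γ : Type*} [Group Γ]
    (A : StarSubalgebra ℂ B)
    (u : Γ →* unitary B)
    (α : Γ → (↥A ≃⋆ₐ[ℂ] ↥A))
    (hαu : ∀ (t : Γ) (a : ↥A), ((α t a : ↥A) : B) = (u t : B) * (a : B) * star (u t : B))
    (hdense : Dense (↑(Submodule.span ℂ
      {x : B | ∃ a ∈ A, ∃ t : Γ, x = a * (u t : B)}) : Set B))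
    (E : B →L[ℂ] B)
    (hEe : ∀ a ∈ A, E (a * (u 1 : B)) = a)
    (hEt : ∀ a ∈ A, ∀ t : Γ, t ≠ 1 → E (a * (u t : B)) = 0)
    (hSAveP : ∀ t : Γ, t ≠ 1 → ∀ b ∈ A, (0 : B) ∈ relC A (⇑(α t)) b)
    (x : B) (t : Γ) (hx : E (x * star (u t : B)) = 1) :
    (u t : B) ∈ relC A (⇑(α t⁻¹)) x := by
  have hy := sub_condExp_mem_averagesToZero hαu hdense hEe hEt hSAveP (x * star (u t : B))
  rw [hx] at hy
  rw [relC_eq_closure_image hαu, Metric.mem_closure_iff]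
  intro ε hε
  obtain ⟨Ψ, hΨ, hlt⟩ := hy 1 (one_mem _) ε hε
  have hu_inv : ((u t⁻¹ : unitary B) : B) = star (u t : B) := by
    rw [map_inv, ← Unitary.star_eq_inv, Unitary.coe_star]
  refine ⟨Ψ (x * star (u t : B)) * u t, ⟨Ψ, hΨ, by simp only [hu_inv, star_star]⟩, ?_⟩
  rw [dist_eq_norm, ← one_sub_mul, CStarRing.norm_mul_mem_unitary _ (u t).2, norm_sub_rev,
    ← apply_one_of_mem_dixmierAverages hΨ, ← map_sub]
  simpa using hlt

/-- Lemma 3.1 (ii): in the abstract reduced crossed product setup for an action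
`α : Γ → Aut(A)` with (SAveP), with ambient C*-algebra `B`, implementing unitaries `u_t`
and canonical conditional expectation `E`, if `x ∈ B` and `t ∈ Γ` satisfy
`E_t(x) = E(x u_t*) = 1`, then `u_t ∈ C_A^{α_{t⁻¹}}(x)`. -/
theorem unitary_mem_twisted_dixmierSet
    {B : Type*} [NormedRing B] [StarRing B] [CStarRing B] [NormedAlgebra ℂ B]
    [CompleteSpace B] [StarModule ℂ B]
    {Γ : Type*} [Group Γ]
    (A : StarSubalgebra ℂ B) (hA : IsClosed (A : Set B))
    (u : Γ →* unitary B)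
    (α : Γ → (↥A ≃⋆ₐ[ℂ] ↥A))
    (hαu : ∀ (t : Γ) (a : ↥A), ((α t a : ↥A) : B) = (u t : B) * (a : B) * star (u t : B))
    (hdense : Dense (↑(Submodule.span ℂ
      {x : B | ∃ a ∈ A, ∃ t : Γ, x = a * (u t : B)}) : Set B))
    (E : B →L[ℂ] B) (hEmem : ∀ x : B, E x ∈ A) (hEnorm : ‖E‖ ≤ 1)
    (hEe : ∀ a ∈ A, E (a * (u 1 : B)) = a)
    (hEt : ∀ a ∈ A, ∀ t : Γ, t ≠ 1 → E (a * (u t : B)) = 0)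
    (hSAveP : ∀ t : Γ, t ≠ 1 → ∀ b ∈ A, (0 : B) ∈ relC A (⇑(α t)) b)
    (x : B) (t : Γ) (hx : E (x * star (u t : B)) = 1) :
    (u t : B) ∈ relC A (⇑(α t⁻¹)) x :=
  unitary_mem_twisted_dixmierSet_general A u α hαu hdense E hEe hEt hSAveP x t hx
end

section
/- Assume the abstract reduced crossed product setup for an action α : Γ → Aut(A) with (SAveP), with ambient C*-algebra B, unitaries (u_t), and conditional expectation E : B → A. Then for every x ∈ B, dist(A, C_A(x)) = 0; that is, for every ε > 0 there exist a ∈ A and y ∈ C_A(x) (the norm-closed convex hull in B of {v x v* : v a unitary element of A}) with ‖a − y‖ < ε. -/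
open ContinuousLinearMap

section Averaging

variable {B : Type*} [NormedRing B] [NormedAlgebra ℂ B]

lemma isLinearMap_mul_left (S : B →L[ℂ] B) : IsLinearMap ℝ fun T : B →L[ℂ] B => S * T :=
  ⟨mul_add S, fun r T => by ext; simp⟩

lemma isLinearMap_mul_right (T : B →L[ℂ] B) : IsLinearMap ℝ fun S : B →L[ℂ] B => S * T :=
  ⟨fun S S' => add_mul S S' T, fun r S => by ext; simp⟩

lemma isLinearMap_apply (x : B) : IsLinearMap ℝ fun T : B →L[ℂ] B => T x :=
  ⟨fun _ _ => rfl, fun _ _ => rfl⟩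

lemma isLinearMap_apply_mul (x y : B) : IsLinearMap ℝ fun T : B →L[ℂ] B => T x * y :=
  ⟨fun S T => add_mul (S x) (T x) y, fun r T => smul_mul_assoc r (T x) y⟩

variable [StarRing B] [StarModule ℂ B]

def unitaryConj (A : StarSubalgebra ℂ B) : Set (B →L[ℂ] B) :=
  {T | ∃ v : ↥A, v ∈ unitary ↥A ∧ T = mulLeftRight ℂ B v (star v)}

def averagingOps (A : StarSubalgebra ℂ B) : Set (B →L[ℂ] B) :=
  convexHull ℝ (unitaryConj A)

variable {A : StarSubalgebra ℂ B} {S T : B →L[ℂ] B}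

lemma one_mem_averagingOps : (1 : B →L[ℂ] B) ∈ averagingOps A :=
  subset_convexHull ℝ _ ⟨1, one_mem _, by ext; simp⟩

lemma mul_mem_unitaryConj (hS : S ∈ unitaryConj A) (hT : T ∈ unitaryConj A) :
    S * T ∈ unitaryConj A := by
  obtain ⟨v, hv, rfl⟩ := hS
  obtain ⟨w, hw, rfl⟩ := hT
  exact ⟨v * w, mul_mem hv hw, by ext; simp [mul_assoc]⟩

lemma mul_mem_averagingOps (hS : S ∈ averagingOps A) (hT : T ∈ averagingOps A) :
    S * T ∈ averagingOps A := by
  have hconj : ∀ S ∈ unitaryConj A, ∀ T ∈ averagingOps A, S * T ∈ averagingOps A :=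
    fun S hS => convexHull_min (fun T hT => subset_convexHull ℝ _ (mul_mem_unitaryConj hS hT))
      ((convex_convexHull ℝ _).is_linear_preimage (isLinearMap_mul_left S))
  exact convexHull_min (fun S hS => hconj S hS T hT)
    ((convex_convexHull ℝ _).is_linear_preimage (isLinearMap_mul_right T)) hS

lemma apply_mem_convexHull (hT : T ∈ averagingOps A) (x : B) :
    T x ∈ convexHull ℝ {y : B | ∃ v : ↥A, v ∈ unitary ↥A ∧ y = (v : B) * x * star (v : B)} := by
  have himage : (fun T : B →L[ℂ] B => T x) '' unitaryConj A =
      {y : B | ∃ v : ↥A, v ∈ unitary ↥A ∧ y = (v : B) * x * star (v : B)} := by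
    ext y
    constructor
    · rintro ⟨_, ⟨v, hv, rfl⟩, rfl⟩
      exact ⟨v, hv, rfl⟩
    · rintro ⟨v, hv, rfl⟩
      exact ⟨_, ⟨v, hv, rfl⟩, rfl⟩
  rw [← himage, ← (isLinearMap_apply x).image_convexHull]
  exact ⟨T, hT, rfl⟩

lemma apply_mem_of_mem_averagingOps (hT : T ∈ averagingOps A) {a : B} (ha : a ∈ A) :
    T a ∈ A := by
  refine convexHull_min ?_ (A.toSubmodule.restrictScalars ℝ).convex (apply_mem_convexHull hT a)
  rintro _ ⟨v, -, rfl⟩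
  show (v : B) * a * star (v : B) ∈ A
  exact mul_mem (mul_mem v.2 ha) (star_mem v.2)

lemma apply_mul_mul_star_mem {u : B} (hAu : ∀ a ∈ A, u * a * star u ∈ A)
    (hT : T ∈ averagingOps A) {b : B} (hb : b ∈ A) : T (b * u) * star u ∈ A := by
  refine convexHull_min ?_ ((A.toSubmodule.restrictScalars ℝ).convex.is_linear_preimage
    (isLinearMap_apply_mul (b * u) (star u))) hT
  rintro _ ⟨v, -, rfl⟩
  show (v : B) * (b * u) * star (v : B) * star u ∈ A
  rw [show (v : B) * (b * u) * star (v : B) * star u = v * b * (u * star (v : B) * star u) by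
    simp only [mul_assoc]]
  exact mul_mem (mul_mem v.2 hb) (hAu _ (star_mem v.2))

variable [CStarRing B]

lemma norm_le_one_of_mem_unitaryConj (hT : T ∈ unitaryConj A) : ‖T‖ ≤ 1 := by
  obtain ⟨v, hv, rfl⟩ := hT
  have hvB : (v : B) ∈ unitary B := Unitary.map_mem A.subtype hv
  refine opNorm_le_bound _ zero_le_one fun x => ?_
  rw [one_mul, mulLeftRight_apply, CStarRing.norm_mul_mem_unitary _ (Unitary.star_mem hvB),
    CStarRing.norm_mem_unitary_mul _ hvB]

lemma norm_le_one_of_mem_averagingOps (hT : T ∈ averagingOps A) : ‖T‖ ≤ 1 := by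
  simpa using convexHull_min (fun S hS => mem_closedBall_zero_iff.2
    (norm_le_one_of_mem_unitaryConj hS)) (convex_closedBall 0 1) hT

lemma exists_mem_averagingOps_norm_apply_mul_lt [CompleteSpace B] {u : B} (hu : u ∈ unitary B)
    {f : ↥A → ↥A} (hf : ∀ a, (f a : B) = u * a * star u) {b : B}
    (h0 : (0 : B) ∈ relC A f b) {ε : ℝ} (hε : 0 < ε) :
    ∃ T ∈ averagingOps A, ‖T (b * u)‖ < ε := by
  have hconj (v : ↥A) : (v : B) * (b * u) * star (v : B) * star u = v * b * star (f v : B) := by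
    simp only [hf v, star_mul, star_star, mul_assoc]
  have himage : (fun T : B →L[ℂ] B => T (b * u) * star u) '' unitaryConj A =
      {y : B | ∃ v : ↥A, v ∈ unitary ↥A ∧ y = (v : B) * b * star (f v : B)} := by
    ext y
    constructor
    · rintro ⟨_, ⟨v, hv, rfl⟩, rfl⟩
      exact ⟨v, hv, hconj v⟩
    · rintro ⟨v, hv, rfl⟩
      exact ⟨_, ⟨v, hv, rfl⟩, hconj v⟩
  rw [relC, ← himage, ← (isLinearMap_apply_mul (b * u) (star u)).image_convexHull,
    Metric.mem_closure_iff] at h0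
  obtain ⟨_, ⟨T, hT, rfl⟩, hdist⟩ := h0 ε hε
  refine ⟨T, hT, ?_⟩
  rwa [dist_zero_left, CStarRing.norm_mul_mem_unitary _ (Unitary.star_mem hu)] at hdist

end Averaging

section Approximation

variable {B : Type*} [NormedRing B] [StarRing B] [NormedAlgebra ℂ B] [StarModule ℂ B]
  {A : StarSubalgebra ℂ B} {x y : B}

variable (A) in
def ApproxByAverages (x : B) : Prop :=
  ∀ ε > 0, ∃ T ∈ averagingOps A, ∃ a ∈ A, ‖T x - a‖ < ε

lemma ApproxByAverages.of_mem (hx : x ∈ A) : ApproxByAverages A x :=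
  fun ε hε => ⟨1, one_mem_averagingOps, x, hx, by simpa using hε⟩

lemma ApproxByAverages.smul (hx : ApproxByAverages A x) (c : ℂ) :
    ApproxByAverages A (c • x) := by
  intro ε hε
  obtain ⟨T, hT, a, ha, hTa⟩ := hx (ε / (‖c‖ + 1)) (by positivity)
  refine ⟨T, hT, c • a, A.smul_mem ha c, ?_⟩
  calc ‖T (c • x) - c • a‖ = ‖c‖ * ‖T x - a‖ := by rw [map_smul, ← smul_sub, norm_smul]
    _ ≤ ‖c‖ * (ε / (‖c‖ + 1)) := by gcongr
    _ < (‖c‖ + 1) * (ε / (‖c‖ + 1)) := by gcongr; linarith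
    _ = ε := by field_simp

variable [CStarRing B]

lemma ApproxByAverages.add (hx : ApproxByAverages A x)
    (hy : ∀ S ∈ averagingOps A, ApproxByAverages A (S y)) : ApproxByAverages A (x + y) := by
  intro ε hε
  obtain ⟨T₁, hT₁, a₁, ha₁, h₁⟩ := hx (ε / 2) (by positivity)
  obtain ⟨T₂, hT₂, a₂, ha₂, h₂⟩ := hy T₁ hT₁ (ε / 2) (by positivity)
  refine ⟨T₂ * T₁, mul_mem_averagingOps hT₂ hT₁, T₂ a₁ + a₂,
    add_mem (apply_mem_of_mem_averagingOps hT₂ ha₁) ha₂, ?_⟩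
  calc ‖(T₂ * T₁) (x + y) - (T₂ a₁ + a₂)‖ = ‖T₂ (T₁ x - a₁) + (T₂ (T₁ y) - a₂)‖ := by
        rw [mul_apply_eq_comp, map_add, map_add, map_sub]; abel_nf
    _ ≤ ‖T₂‖ * ‖T₁ x - a₁‖ + ‖T₂ (T₁ y) - a₂‖ :=
        (norm_add_le _ _).trans (by gcongr; exact le_opNorm _ _)
    _ ≤ 1 * ‖T₁ x - a₁‖ + ‖T₂ (T₁ y) - a₂‖ := by
        gcongr; exact norm_le_one_of_mem_averagingOps hT₂
    _ < ε / 2 + ε / 2 := by linarith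
    _ = ε := by ring

lemma isClosed_setOf_approxByAverages : IsClosed {x : B | ApproxByAverages A x} := by
  refine isClosed_of_closure_subset fun x hx ε hε => ?_
  obtain ⟨x', hx', hxx'⟩ := Metric.mem_closure_iff.1 hx (ε / 2) (by positivity)
  obtain ⟨T, hT, a, ha, hTa⟩ := hx' (ε / 2) (by positivity)
  refine ⟨T, hT, a, ha, ?_⟩
  calc ‖T x - a‖ ≤ ‖T (x - x')‖ + ‖T x' - a‖ := by
        rw [map_sub]; exact norm_sub_le_norm_sub_add_norm_sub _ _ _
    _ ≤ ‖x - x'‖ + ‖T x' - a‖ := by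
        gcongr
        exact (le_opNorm _ _).trans (mul_le_of_le_one_left (norm_nonneg _)
          (norm_le_one_of_mem_averagingOps hT))
    _ < ε / 2 + ε / 2 := by rw [← dist_eq_norm]; gcongr
    _ = ε := by ring

-- Quantifying over a prior average `S` is what makes the carrier closed under addition:
-- approximate `S x` by `T₁`, then `T₁ (S y)` by `T₂`.
variable (A) in
def approxByAveragesSubmodule : Submodule ℂ B where
  carrier := {x | ∀ S ∈ averagingOps A, ApproxByAverages A (S x)}
  zero_mem' _ _ := by simpa using ApproxByAverages.of_mem (zero_mem A)
  add_mem' {x y} hx hy S hS := by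
    rw [map_add]
    exact (hx S hS).add fun S' hS' => by
      simpa [mul_apply_eq_comp] using hy (S' * S) (mul_mem_averagingOps hS' hS)
  smul_mem' c x hx S hS := by
    rw [map_smul]
    exact (hx S hS).smul c

lemma isClosed_approxByAveragesSubmodule : IsClosed (approxByAveragesSubmodule A : Set B) := by
  have : (approxByAveragesSubmodule A : Set B) =
      ⋂ S ∈ averagingOps A, S ⁻¹' {x | ApproxByAverages A x} := by
    ext; simp [approxByAveragesSubmodule]
  rw [this]
  exact isClosed_biInter fun S _ => isClosed_setOf_approxByAverages.preimage S.continuous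

lemma mem_approxByAveragesSubmodule_of_mem (hx : x ∈ A) : x ∈ approxByAveragesSubmodule A :=
  fun _ hS => .of_mem (apply_mem_of_mem_averagingOps hS hx)

lemma mul_mem_approxByAveragesSubmodule [CompleteSpace B] {u : B} (hu : u ∈ unitary B)
    {f : ↥A → ↥A} (hf : ∀ a, (f a : B) = u * a * star u) (h0 : ∀ b ∈ A, (0 : B) ∈ relC A f b)
    {b : B} (hb : b ∈ A) : b * u ∈ approxByAveragesSubmodule A := by
  intro S hS ε hε
  have hAu (a : B) (ha : a ∈ A) : u * a * star u ∈ A := hf ⟨a, ha⟩ ▸ (f ⟨a, ha⟩).2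
  have hc : S (b * u) * star u ∈ A := apply_mul_mul_star_mem hAu hS hb
  obtain ⟨T, hT, hTc⟩ := exists_mem_averagingOps_norm_apply_mul_lt hu hf (h0 _ hc) hε
  refine ⟨T, hT, 0, zero_mem A, ?_⟩
  rw [sub_zero]
  rwa [mul_assoc, Unitary.star_mul_self_of_mem hu, mul_one] at hTc

end Approximation

theorem dist_subalgebra_dixmierSet_zero_general
    {B : Type*} [NormedRing B] [StarRing B] [CStarRing B] [NormedAlgebra ℂ B]
    [CompleteSpace B] [StarModule ℂ B]
    {Γ : Type*} [Group Γ]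
    (A : StarSubalgebra ℂ B)
    (u : Γ →* unitary B)
    (α : Γ → (↥A ≃⋆ₐ[ℂ] ↥A))
    (hαu : ∀ (t : Γ) (a : ↥A), ((α t a : ↥A) : B) = (u t : B) * (a : B) * star (u t : B))
    (hdense : Dense (↑(Submodule.span ℂ
      {x : B | ∃ a ∈ A, ∃ t : Γ, x = a * (u t : B)}) : Set B))
    (hSAveP : ∀ t : Γ, t ≠ 1 → ∀ b ∈ A, (0 : B) ∈ relC A (⇑(α t)) b) :
    ∀ x : B, ∀ ε : ℝ, 0 < ε → ∃ a ∈ A, ∃ y ∈ relC A id x, ‖a - y‖ < ε := by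
  intro x ε hε
  have hgen : {x : B | ∃ a ∈ A, ∃ t : Γ, x = a * (u t : B)} ⊆ approxByAveragesSubmodule A := by
    rintro _ ⟨a, ha, t, rfl⟩
    obtain rfl | ht := eq_or_ne t 1
    · simpa using mem_approxByAveragesSubmodule_of_mem ha
    · exact mul_mem_approxByAveragesSubmodule (u t).2 (hαu t) (hSAveP t ht) ha
  have hx : x ∈ approxByAveragesSubmodule A :=
    closure_minimal (Submodule.span_le.2 hgen) isClosed_approxByAveragesSubmodule (hdense x)
  obtain ⟨T, hT, a, ha, hTa⟩ := hx 1 one_mem_averagingOps ε hε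
  exact ⟨a, ha, T x, subset_closure (apply_mem_convexHull hT x), by rwa [norm_sub_rev]⟩

/-- Lemma 3.1 (iii): in the abstract reduced crossed product setup for an action
`α : Γ → Aut(A)` with (SAveP), with ambient C*-algebra `B`, implementing unitaries `u_t`
and canonical conditional expectation `E`, for every `x ∈ B` we have
`dist(A, C_A(x)) = 0`. -/
theorem dist_subalgebra_dixmierSet_zero
    {B : Type*} [NormedRing B] [StarRing B] [CStarRing B] [NormedAlgebra ℂ B]
    [CompleteSpace B] [StarModule ℂ B]
    {Γ : Type*} [Group Γ]
    (A : StarSubalgebra ℂ B) (hA : IsClosed (A : Set B))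
    (u : Γ →* unitary B)
    (α : Γ → (↥A ≃⋆ₐ[ℂ] ↥A))
    (hαu : ∀ (t : Γ) (a : ↥A), ((α t a : ↥A) : B) = (u t : B) * (a : B) * star (u t : B))
    (hdense : Dense (↑(Submodule.span ℂ
      {x : B | ∃ a ∈ A, ∃ t : Γ, x = a * (u t : B)}) : Set B))
    (E : B →L[ℂ] B) (hEmem : ∀ x : B, E x ∈ A) (hEnorm : ‖E‖ ≤ 1)
    (hEe : ∀ a ∈ A, E (a * (u 1 : B)) = a)
    (hEt : ∀ a ∈ A, ∀ t : Γ, t ≠ 1 → E (a * (u t : B)) = 0)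
    (hSAveP : ∀ t : Γ, t ≠ 1 → ∀ b ∈ A, (0 : B) ∈ relC A (⇑(α t)) b) :
    ∀ x : B, ∀ ε : ℝ, 0 < ε → ∃ a ∈ A, ∃ y ∈ relC A id x, ‖a - y‖ < ε :=
  dist_subalgebra_dixmierSet_zero_general A u α hαu hdense hSAveP
end

section
/- Assume the abstract reduced crossed product setup for an action α : Γ → Aut(A) with (SAveP), with ambient C*-algebra B, unitaries (u_t), and conditional expectation E : B → A. Let τ be an α-invariant tracial state on A, i.e., a linear functional τ : A → ℂ with τ(1) = 1, τ(a* a) ≥ 0, τ(a b) = τ(b a), and τ ∘ α_t = τ for all t ∈ Γ. If ρ : B → ℂ is a continuous linear functional with ρ(a) = τ(a) for all a ∈ A and ρ(u x u*) = ρ(x) for all x ∈ B and all unitaries u ∈ A, then ρ = τ ∘ E. In particular, τ ∘ E is the unique such extension of τ, and any continuous tracial state on B extending τ equals τ ∘ E. -/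
open scoped ComplexOrder

/-!
A functional `ρ` that is invariant under conjugation by unitaries of `A` is constant, as
`b ↦ ρ (b * u t)`, on every set `{v a α_t(v)* : v ∈ U(A)}`, because
`v a α_t(v)* u_t = v (a u_t) v*`. Being continuous and real-linear, it is then constant on the
closed convex hull `C_A^{α_t}(a)`, which contains `0` by (SAveP); hence `ρ (a u_t) = 0` for
`t ≠ e`. So `ρ` and `ρ ∘ E` agree on the dense span of the `a u_t`, and `ρ = ρ ∘ E = τ ∘ E`.
-/

theorem ContinuousLinearMap.apply_eq_of_mem_closure_convexHull {E F : Type*}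
    [AddCommGroup E] [Module ℝ E] [TopologicalSpace E]
    [AddCommGroup F] [Module ℝ F] [TopologicalSpace F] [T2Space F]
    (f : E →L[ℝ] F) {s : Set E} {c : F} (hs : ∀ y ∈ s, f y = c) {x : E}
    (hx : x ∈ closure (convexHull ℝ s)) : f x = c :=
  have hconvex : Convex ℝ (f ⁻¹' {c}) := (convex_singleton c).linear_preimage f.toLinearMap
  closure_minimal (convexHull_min hs hconvex) (isClosed_eq f.continuous continuous_const) hx

theorem mul_star_conj_mul_eq_conj {B : Type*} [Ring B] [StarRing B] {v a w : B}
    (hw : w ∈ unitary B) : v * a * star (w * v * star w) * w = v * (a * w) * star v := by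
  simp only [star_mul, star_star, mul_assoc, Unitary.star_mul_self_of_mem hw, mul_one]

theorem map_mul_eq_zero_of_zero_mem_relC {B : Type*} [NormedRing B] [StarRing B] [CStarRing B]
    [NormedAlgebra ℂ B] [CompleteSpace B] [StarModule ℂ B] (A : StarSubalgebra ℂ B)
    {w : B} (hw : w ∈ unitary B) {β : ↥A → ↥A} (hβ : ∀ v : ↥A, (β v : B) = w * v * star w)
    (ρ : B →L[ℂ] ℂ)
    (hρ : ∀ v : ↥A, v ∈ unitary ↥A → ∀ x : B, ρ ((v : B) * x * star (v : B)) = ρ x)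
    {a : B} (h0 : (0 : B) ∈ relC A β a) : ρ (a * w) = 0 := by
  let g : B →L[ℝ] ℂ := (ρ.comp ((ContinuousLinearMap.mul ℂ B).flip w)).restrictScalars ℝ
  have hg : ∀ y ∈ {y : B | ∃ v : ↥A, v ∈ unitary ↥A ∧ y = (v : B) * a * star ((β v : ↥A) : B)},
      g y = ρ (a * w) := by
    rintro _ ⟨v, hv, rfl⟩
    change ρ ((v : B) * a * star ((β v : ↥A) : B) * w) = ρ (a * w)
    rw [hβ, mul_star_conj_mul_eq_conj hw, hρ v hv]
  rw [← g.apply_eq_of_mem_closure_convexHull hg h0, map_zero]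

theorem conj_unitary_invariant_of_map_mul_comm {R M : Type*} [Monoid R] [StarMul R]
    (σ : R → M) (hσ : ∀ x y : R, σ (x * y) = σ (y * x)) {v : R} (hv : v ∈ unitary R) (x : R) :
    σ (v * x * star v) = σ x := by
  rw [hσ, ← mul_assoc, Unitary.star_mul_self_of_mem hv, one_mul]

theorem comp_eq_self_of_map_mul_unitary_eq_zero {B : Type*} [NormedRing B] [StarRing B]
    [NormedAlgebra ℂ B] [StarModule ℂ B] {Γ : Type*} [Group Γ] {A : StarSubalgebra ℂ B}
    {u : Γ →* unitary B}
    (hdense : Dense (↑(Submodule.span ℂ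
      {x : B | ∃ a ∈ A, ∃ t : Γ, x = a * (u t : B)}) : Set B))
    {E : B →L[ℂ] B} (hEe : ∀ a ∈ A, E (a * (u 1 : B)) = a)
    (hEt : ∀ a ∈ A, ∀ t : Γ, t ≠ 1 → E (a * (u t : B)) = 0)
    {ρ : B →L[ℂ] ℂ} (hρ : ∀ a ∈ A, ∀ t : Γ, t ≠ 1 → ρ (a * (u t : B)) = 0) :
    ρ.comp E = ρ := by
  refine ContinuousLinearMap.ext_on hdense ?_
  rintro _ ⟨a, ha, t, rfl⟩
  rw [ContinuousLinearMap.comp_apply]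
  by_cases ht : t = 1
  · subst ht
    rw [hEe a ha, map_one, OneMemClass.coe_one, mul_one]
  · rw [hEt a ha t ht, hρ a ha t ht, map_zero]

theorem invariant_trace_unique_extension_general
    {B : Type*} [NormedRing B] [StarRing B] [CStarRing B] [NormedAlgebra ℂ B]
    [CompleteSpace B] [StarModule ℂ B]
    {Γ : Type*} [Group Γ]
    (A : StarSubalgebra ℂ B)
    (u : Γ →* unitary B)
    (α : Γ → (↥A ≃⋆ₐ[ℂ] ↥A))
    (hαu : ∀ (t : Γ) (a : ↥A), ((α t a : ↥A) : B) = (u t : B) * (a : B) * star (u t : B))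
    (hdense : Dense (↑(Submodule.span ℂ
      {x : B | ∃ a ∈ A, ∃ t : Γ, x = a * (u t : B)}) : Set B))
    (E : B →L[ℂ] B) (hEmem : ∀ x : B, E x ∈ A)
    (hEe : ∀ a ∈ A, E (a * (u 1 : B)) = a)
    (hEt : ∀ a ∈ A, ∀ t : Γ, t ≠ 1 → E (a * (u t : B)) = 0)
    (hSAveP : ∀ t : Γ, t ≠ 1 → ∀ b ∈ A, (0 : B) ∈ relC A (⇑(α t)) b)
    (τ : ↥A →ₗ[ℂ] ℂ) :
    (∀ ρ : B →L[ℂ] ℂ, (∀ a : ↥A, ρ (a : B) = τ a) →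
      (∀ v : ↥A, v ∈ unitary ↥A → ∀ x : B, ρ ((v : B) * x * star (v : B)) = ρ x) →
      ∀ x : B, ρ x = τ ⟨E x, hEmem x⟩) ∧
    (∀ σ : B →L[ℂ] ℂ, (∀ a : ↥A, σ (a : B) = τ a) →
      (∀ x : B, 0 ≤ σ (star x * x)) → (∀ x y : B, σ (x * y) = σ (y * x)) →
      ∀ x : B, σ x = τ ⟨E x, hEmem x⟩) := by
  have unique : ∀ ρ : B →L[ℂ] ℂ, (∀ a : ↥A, ρ (a : B) = τ a) →
      (∀ v : ↥A, v ∈ unitary ↥A → ∀ x : B, ρ ((v : B) * x * star (v : B)) = ρ x) →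
      ∀ x : B, ρ x = τ ⟨E x, hEmem x⟩ := by
    intro ρ hρA hρinv x
    have hoff : ∀ a ∈ A, ∀ t : Γ, t ≠ 1 → ρ (a * (u t : B)) = 0 := fun a ha t ht =>
      map_mul_eq_zero_of_zero_mem_relC A (u t).2 (hαu t) ρ hρinv (hSAveP t ht a ha)
    rw [← comp_eq_self_of_map_mul_unitary_eq_zero hdense hEe hEt hoff,
      ContinuousLinearMap.comp_apply]
    exact hρA ⟨E x, hEmem x⟩
  refine ⟨unique, fun σ hσA _ hσtr => unique σ hσA fun v hv => ?_⟩
  have hvB : (v : B) ∈ unitary B := Unitary.map_mem A.subtype hv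
  exact conj_unitary_invariant_of_map_mul_comm σ hσtr hvB

/-- Corollary 3.2: in the abstract reduced crossed product setup for an action
`α : Γ → Aut(A)` with (SAveP), if `τ` is an `α`-invariant tracial state on `A`, then any
continuous linear functional `ρ` on `B` that extends `τ` and is invariant under
conjugation by unitaries of `A` equals `τ ∘ E`; in particular any continuous tracial
state on `B` extending `τ` equals `τ ∘ E`. -/
theorem invariant_trace_unique_extension
    {B : Type*} [NormedRing B] [StarRing B] [CStarRing B] [NormedAlgebra ℂ B]
    [CompleteSpace B] [StarModule ℂ B]
    {Γ : Type*} [Group Γ]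
    (A : StarSubalgebra ℂ B) (hA : IsClosed (A : Set B))
    (u : Γ →* unitary B)
    (α : Γ → (↥A ≃⋆ₐ[ℂ] ↥A))
    (hαu : ∀ (t : Γ) (a : ↥A), ((α t a : ↥A) : B) = (u t : B) * (a : B) * star (u t : B))
    (hdense : Dense (↑(Submodule.span ℂ
      {x : B | ∃ a ∈ A, ∃ t : Γ, x = a * (u t : B)}) : Set B))
    (E : B →L[ℂ] B) (hEmem : ∀ x : B, E x ∈ A) (hEnorm : ‖E‖ ≤ 1)
    (hEe : ∀ a ∈ A, E (a * (u 1 : B)) = a)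
    (hEt : ∀ a ∈ A, ∀ t : Γ, t ≠ 1 → E (a * (u t : B)) = 0)
    (hSAveP : ∀ t : Γ, t ≠ 1 → ∀ b ∈ A, (0 : B) ∈ relC A (⇑(α t)) b)
    (τ : ↥A →ₗ[ℂ] ℂ) (hτ1 : τ 1 = 1)
    (hτpos : ∀ a : ↥A, 0 ≤ τ (star a * a))
    (hτtr : ∀ a b : ↥A, τ (a * b) = τ (b * a))
    (hτinv : ∀ (t : Γ) (a : ↥A), τ (α t a) = τ a) :
    (∀ ρ : B →L[ℂ] ℂ, (∀ a : ↥A, ρ (a : B) = τ a) →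
      (∀ v : ↥A, v ∈ unitary ↥A → ∀ x : B, ρ ((v : B) * x * star (v : B)) = ρ x) →
      ∀ x : B, ρ x = τ ⟨E x, hEmem x⟩) ∧
    (∀ σ : B →L[ℂ] ℂ, (∀ a : ↥A, σ (a : B) = τ a) →
      (∀ x : B, 0 ≤ σ (star x * x)) → (∀ x y : B, σ (x * y) = σ (y * x)) →
      ∀ x : B, σ x = τ ⟨E x, hEmem x⟩) :=
  invariant_trace_unique_extension_general A u α hαu hdense E hEmem hEe hEt hSAveP τ
end
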